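/- arXiv:2510.25710 — 2 statements merged into one kernel-verified Lean document; each statement's English description precedes it below -/
import Mathlib

section
/- Let r ≥ 2 be an integer and let G be a finite simple graph whose complement is chordal (i.e., G is co-chordal). Then the simplicial complex Σ_r(G) is vertex decomposable. -/
open Finset

variable {V : Type*} [Fintype V] [DecidableEq V]

/-- The induced subgraph of `G` on the finset `s` is connected. -/
def ConnOn (G : SimpleGraph V) (s : Finset V) : Prop :=
  (G.induce (s : Set V)).Connected

/-- `Supp_r(A, G)` relative to the ground (vertex) set `U`:
all `F ⊆ U` with `|F| = r`, `F ∩ A = ∅` and `G[F ∪ A]` connected. -/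
def Supp (G : SimpleGraph V) (U A : Finset V) (r : ℕ) : Set (Finset V) :=
  {F | F ⊆ U ∧ F.card = r ∧ F ∩ A = ∅ ∧ ConnOn G (F ∪ A)}

/-- The `r`-co-connected complex `Σ_r(A, G)` on ground set `U`: faces are all subsets of
sets of the form `(U \ F) \ A` with `F ∈ Supp_r(A, G)`. -/
def SigmaC (G : SimpleGraph V) (U A : Finset V) (r : ℕ) : Set (Finset V) :=
  {H | ∃ F ∈ Supp G U A r, H ⊆ (U \ F) \ A}

/-- The circuit set of the `r`-connected clutter `Con_r(G)` on ground set `U`. -/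
def ConR (G : SimpleGraph V) (U : Finset V) (r : ℕ) : Set (Finset V) :=
  {W | W ⊆ U ∧ W.card = r ∧ ConnOn G W}

/-- `Σ_r(G)`: faces are all subsets of sets of the form `U \ W`, `W ∈ Con_r(G)`. -/
def SigmaG (G : SimpleGraph V) (U : Finset V) (r : ℕ) : Set (Finset V) :=
  {H | ∃ W ∈ ConR G U r, H ⊆ U \ W}

/-- Deletion of a vertex in a simplicial complex. -/
def delC (Δ : Set (Finset V)) (x : V) : Set (Finset V) :=
  {H | H ∈ Δ ∧ x ∉ H}

/-- Link of a vertex in a simplicial complex. -/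
def linkC (Δ : Set (Finset V)) (x : V) : Set (Finset V) :=
  {H | H ∈ Δ ∧ x ∉ H ∧ insert x H ∈ Δ}

/-- A facet is a maximal face. -/
def IsFacet (Δ : Set (Finset V)) (F : Finset V) : Prop :=
  F ∈ Δ ∧ ∀ H ∈ Δ, F ⊆ H → F = H

/-- `x` is a shedding vertex: every facet of `del_Δ(x)` is a facet of `Δ`. -/
def IsShedding (Δ : Set (Finset V)) (x : V) : Prop :=
  ∀ F, IsFacet (delC Δ x) F → IsFacet Δ F

/-- Vertex decomposability of a simplicial complex (the void complex, the empty complex and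
simplices are vertex decomposable; otherwise one needs a shedding vertex whose link and
deletion are vertex decomposable). -/
inductive VD {V : Type*} [DecidableEq V] : Set (Finset V) → Prop
  | simplex (s : Finset V) : VD {t | t ⊆ s}
  | void : VD (∅ : Set (Finset V))
  | step (Δ : Set (Finset V)) (x : V) (hx : {x} ∈ Δ) (hshed : IsShedding Δ x)
      (hlink : VD (linkC Δ x)) (hdel : VD (delC Δ x)) : VD Δ

/-- `G` has an induced cycle on `n` vertices. -/
def HasInducedCycle {V : Type*} (G : SimpleGraph V) (n : ℕ) : Prop :=
  ∃ f : Fin n → V, Function.Injective f ∧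
    ∀ i j : Fin n, G.Adj (f i) (f j) ↔
      (((i : ℕ) + 1) % n = (j : ℕ) ∨ ((j : ℕ) + 1) % n = (i : ℕ))

/-- A graph is chordal if it has no induced cycle of length at least `4`. -/
def Chordal {V : Type*} (G : SimpleGraph V) : Prop :=
  ∀ n : ℕ, 4 ≤ n → ¬ HasInducedCycle G n

set_option linter.unusedSectionVars false
set_option linter.unusedVariables false
set_option maxHeartbeats 1600000

/-- one-step relation inside a finset -/
def RIn (G : SimpleGraph V) (s : Finset V) (a b : V) : Prop :=
  a ∈ s ∧ b ∈ s ∧ G.Adj a b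

def ReachIn (G : SimpleGraph V) (s : Finset V) : V → V → Prop :=
  Relation.ReflTransGen (RIn G s)

lemma reachIn_mono {G : SimpleGraph V} {s t : Finset V} (hst : s ⊆ t) {a b : V}
    (h : ReachIn G s a b) : ReachIn G t a b := by
  refine Relation.ReflTransGen.mono (r := RIn G s) (p := RIn G t) ?_ a b h
  rintro p q ⟨hp, hq, hadj⟩; exact ⟨hst hp, hst hq, hadj⟩

lemma reachIn_symm {G : SimpleGraph V} {s : Finset V} {a b : V}
    (h : ReachIn G s a b) : ReachIn G s b a := by
  induction h with
  | refl => exact Relation.ReflTransGen.refl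
  | tail _ hstep ih =>
      obtain ⟨hp, hq, hadj⟩ := hstep
      exact Relation.ReflTransGen.head ⟨hq, hp, hadj.symm⟩ ih

lemma induce_walk_reachIn {G : SimpleGraph V} {s : Finset V} :
    ∀ (u v : (s : Set V)) (_ : (G.induce (s : Set V)).Walk u v), ReachIn G s u.1 v.1 := by
  intro u v w
  induction w with
  | nil => exact Relation.ReflTransGen.refl
  | @cons x y z hadj p ih =>
      exact Relation.ReflTransGen.head ⟨Finset.mem_coe.1 x.2, Finset.mem_coe.1 y.2, hadj⟩ ih

lemma reachIn_reachable {G : SimpleGraph V} {s : Finset V} {u : V} (hu : u ∈ s) :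
    ∀ (q : V) (_ : ReachIn G s u q) (hq : q ∈ s),
      (G.induce (s : Set V)).Reachable ⟨u, by simpa using hu⟩ ⟨q, by simpa using hq⟩ := by
  intro q hrtg
  induction hrtg with
  | refl => intro _; exact SimpleGraph.Reachable.refl _
  | @tail b c _ hstep ih =>
      intro hc
      obtain ⟨hb, _, hadj⟩ := hstep
      have h1 := ih hb
      have h2 : (G.induce (s : Set V)).Adj ⟨b, by simpa using hb⟩ ⟨c, by simpa using hc⟩ := hadj
      exact h1.trans h2.reachable

lemma connOn_iff {G : SimpleGraph V} {s : Finset V} :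
    ConnOn G s ↔ s.Nonempty ∧ ∀ a ∈ s, ∀ b ∈ s, ReachIn G s a b := by
  constructor
  · intro h
    have hpre := h.preconnected
    obtain ⟨⟨a, ha⟩⟩ := h.nonempty
    refine ⟨⟨a, by simpa using ha⟩, ?_⟩
    intro a ha b hb
    obtain ⟨w⟩ := hpre ⟨a, by simpa using ha⟩ ⟨b, by simpa using hb⟩
    exact induce_walk_reachIn _ _ w
  · rintro ⟨⟨a, ha⟩, h⟩
    haveI : Nonempty (s : Set V) := ⟨⟨a, by simpa using ha⟩⟩
    refine SimpleGraph.Connected.mk ?_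
    rintro ⟨u, hu⟩ ⟨v, hv⟩
    exact reachIn_reachable (by simpa using hu) v
      (h u (by simpa using hu) v (by simpa using hv)) (by simpa using hv)

lemma connOn_nonempty {G : SimpleGraph V} {s : Finset V} (h : ConnOn G s) : s.Nonempty :=
  (connOn_iff.1 h).1

lemma connOn_singleton (G : SimpleGraph V) (x : V) : ConnOn G {x} := by
  rw [connOn_iff]
  refine ⟨⟨x, mem_singleton_self x⟩, ?_⟩
  intro a ha b hb
  rw [mem_singleton] at ha hb; subst ha; subst hb
  exact Relation.ReflTransGen.refl

lemma connOn_insert {G : SimpleGraph V} {s : Finset V} {x y : V}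
    (hs : ConnOn G s) (hy : y ∈ s) (hadj : G.Adj x y) : ConnOn G (insert x s) := by
  rw [connOn_iff] at hs ⊢
  obtain ⟨_, h⟩ := hs
  refine ⟨⟨x, mem_insert_self x s⟩, ?_⟩
  have hsub : s ⊆ insert x s := subset_insert x s
  have hx2y : ReachIn G (insert x s) x y :=
    Relation.ReflTransGen.single ⟨mem_insert_self x s, hsub hy, hadj⟩
  intro a ha b hb
  rcases mem_insert.1 ha with rfl | ha' <;> rcases mem_insert.1 hb with rfl | hb'
  · exact Relation.ReflTransGen.refl
  · exact hx2y.trans (reachIn_mono hsub (h y hy b hb'))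
  · exact (reachIn_mono hsub (h a ha' y hy)).trans (reachIn_symm hx2y)
  · exact reachIn_mono hsub (h a ha' b hb')

lemma reachIn_cross {G : SimpleGraph V} {s F : Finset V} {p q : V}
    (h : ReachIn G s p q) (hp : p ∈ F) (hq : q ∉ F) :
    ∃ f ∈ F, ∃ w, w ∉ F ∧ RIn G s f w := by
  induction h with
  | refl => exact absurd hp hq
  | @tail b c hrtg hstep ih =>
      by_cases hb : b ∈ F
      · exact ⟨b, hb, c, hq, hstep⟩
      · exact ih hb

/-- crossing edge between two nonempty parts of a connected set -/
lemma exists_cross_adj {G : SimpleGraph V} {F A : Finset V}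
    (hconn : ConnOn G (F ∪ A)) (hF : F.Nonempty) (hA : A.Nonempty)
    (hdisj : F ∩ A = ∅) : ∃ f ∈ F, ∃ a ∈ A, G.Adj f a := by
  rw [connOn_iff] at hconn
  obtain ⟨_, h⟩ := hconn
  obtain ⟨f0, hf0⟩ := hF
  obtain ⟨a0, ha0⟩ := hA
  have hr := h f0 (mem_union_left _ hf0) a0 (mem_union_right _ ha0)
  have ha0F : a0 ∉ F := by
    intro hc; have : a0 ∈ F ∩ A := mem_inter.2 ⟨hc, ha0⟩; simp [hdisj] at this
  obtain ⟨f, hf, w, hw, _, hwmem, hadj⟩ := reachIn_cross hr hf0 ha0F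
  have hwA : w ∈ A := by
    rcases mem_union.1 hwmem with h1 | h1
    · exact absurd h1 hw
    · exact h1
  exact ⟨f, hf, w, hwA, hadj⟩

lemma exists_edge_of_connOn {G : SimpleGraph V} {F : Finset V}
    (hconn : ConnOn G F) (hcard : 2 ≤ F.card) : ∃ u ∈ F, ∃ v ∈ F, G.Adj u v := by
  rw [connOn_iff] at hconn
  obtain ⟨⟨u, hu⟩, h⟩ := hconn
  obtain ⟨v, hv, hne⟩ := Finset.exists_mem_ne (by omega : 1 < F.card) u
  have hr := h v hv u hu
  -- nontrivial RTG has a step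
  have : ∀ (p q : V), ReachIn G F p q → p ≠ q → ∃ a ∈ F, ∃ b ∈ F, G.Adj a b := by
    intro p q hrtg
    induction hrtg with
    | refl => intro hne; exact absurd rfl hne
    | tail _ hstep _ =>
        intro _
        obtain ⟨h1, h2, h3⟩ := hstep
        exact ⟨_, h1, _, h2, h3⟩
  exact this v u hr hne

/-- Key lemma: one can remove some vertex of `F` keeping `K`-augmented connectivity. -/
lemma key_removable {G : SimpleGraph V} :
    ∀ n (F K : Finset V), F.card = n → F.Nonempty → K.Nonempty → F ∩ K = ∅ →
    ConnOn G K → ConnOn G (F ∪ K) → ∃ v ∈ F, ConnOn G ((F.erase v) ∪ K) := by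
  intro n
  induction n using Nat.strong_induction_on with
  | _ n ih =>
    intro F K hcard hF hK hdisj hconnK hconnFK
    obtain ⟨f0, hf0⟩ := hF
    rcases eq_or_lt_of_le (Finset.one_le_card.2 ⟨f0, hf0⟩) with h1 | h2
    · -- |F| = 1
      refine ⟨f0, hf0, ?_⟩
      have : F = {f0} := by
        apply Finset.eq_singleton_iff_unique_mem.2
        refine ⟨hf0, fun y hy => ?_⟩
        by_contra hne
        have := Finset.one_lt_card.2 ⟨y, hy, f0, hf0, hne⟩
        omega
      rw [this]
      simpa using hconnK
    · -- |F| ≥ 2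
      obtain ⟨f, hf, k, hk, hadj⟩ := exists_cross_adj hconnFK ⟨f0, hf0⟩ hK hdisj
      set K' := insert f K with hK'
      set F' := F.erase f with hF'
      have hFK' : F' ∪ K' = F ∪ K := by
        ext z
        simp only [hF', hK', mem_union, mem_erase, mem_insert]
        constructor
        · rintro (⟨_, h⟩ | (rfl | h))
          · exact Or.inl h
          · exact Or.inl hf
          · exact Or.inr h
        · rintro (h | h)
          · by_cases hz : z = f
            · exact Or.inr (Or.inl hz)
            · exact Or.inl ⟨hz, h⟩
          · exact Or.inr (Or.inr h)
      have hdisj' : F' ∩ K' = ∅ := by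
        ext z
        simp only [hF', hK', mem_inter, mem_erase, mem_insert, notMem_empty, iff_false]
        rintro ⟨⟨hzf, hzF⟩, (rfl | hzK)⟩
        · exact hzf rfl
        · have : z ∈ F ∩ K := mem_inter.2 ⟨hzF, hzK⟩
          simp [hdisj] at this
      have hF'ne : F'.Nonempty := by
        rw [hF']
        apply Finset.card_pos.1
        rw [Finset.card_erase_of_mem hf]
        omega
      have hcard' : F'.card < n := by
        rw [hF', Finset.card_erase_of_mem hf, ← hcard]
        omega
      obtain ⟨v, hv, hconn'⟩ := ih F'.card hcard' F' K' rfl hF'ne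
        ⟨f, mem_insert_self f K⟩ hdisj'
        (connOn_insert hconnK hk hadj) (by rwa [hFK'])
      refine ⟨v, Finset.mem_of_mem_erase hv, ?_⟩
      have heq : (F'.erase v) ∪ K' = (F.erase v) ∪ K := by
        have hvf : v ≠ f := (Finset.mem_erase.1 hv).1
        ext z
        simp only [hF', hK', mem_union, mem_erase, mem_insert]
        constructor
        · rintro (⟨hzv, _, hzF⟩ | (rfl | h))
          · exact Or.inl ⟨hzv, hzF⟩
          · exact Or.inl ⟨Ne.symm hvf, hf⟩
          · exact Or.inr h
        · rintro (⟨hzv, hzF⟩ | h)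
          · by_cases hz : z = f
            · exact Or.inr (Or.inl hz)
            · exact Or.inl ⟨hzv, hz, hzF⟩
          · exact Or.inr (Or.inr h)
      rwa [heq] at hconn'

lemma reachIn_closure {G : SimpleGraph V} {t : Finset V} {P : V → Prop} {a z : V}
    (ha : P a) (hstep : ∀ p q, RIn G t p q → P p → P q) (h : ReachIn G t a z) : P z := by
  induction h with
  | refl => exact ha
  | @tail b c hrtg hs ih => exact hstep b c hs ih

/-- walks-through-`c` predicate -/
def PathTo (H : SimpleGraph V) (c : Finset V) (s t : V) (k : ℕ) : Prop :=
  ∃ g : ℕ → V, g 0 = s ∧ g k = t ∧ (∀ i, 0 < i → i < k → g i ∈ c) ∧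
    ∀ i, i < k → H.Adj (g i) (g (i + 1))

lemma reachIn_to_path {H : SimpleGraph V} {c : Finset V} {u u' : V}
    (h : ReachIn H c u u') (hu : u ∈ c) :
    ∃ k, ∃ g : ℕ → V, g 0 = u ∧ g k = u' ∧ (∀ i, i ≤ k → g i ∈ c) ∧
      ∀ i, i < k → H.Adj (g i) (g (i + 1)) := by
  induction h with
  | refl => exact ⟨0, fun _ => u, rfl, rfl, fun i _ => hu, fun i hi => by omega⟩
  | @tail b c' hrtg hs ih =>
      obtain ⟨k, g, h0, hk, hmem, hadj⟩ := ih
      refine ⟨k + 1, fun i => if i = k + 1 then c' else g i, ?_, ?_, ?_, ?_⟩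
      · simp only []; rw [if_neg (by omega : ¬ (0 = k + 1))]; exact h0
      · simp
      · intro i hi
        simp only []
        by_cases hik : i = k + 1
        · rw [if_pos hik]; exact hs.2.1
        · rw [if_neg hik]; exact hmem i (by omega)
      · intro i hi
        simp only []
        by_cases hik : i = k
        · subst hik
          rw [if_neg (by omega : ¬ (i = i + 1)), if_pos rfl, hk]
          exact hs.2.2
        · rw [if_neg (by omega : ¬ (i = k + 1)), if_neg (by omega : ¬ (i + 1 = k + 1))]
          exact hadj i (by omega)

lemma pathTo_of_ends {H : SimpleGraph V} {c : Finset V} {s t u u' : V}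
    (hsu : H.Adj s u) (hu't : H.Adj u' t) (hu : u ∈ c) (hr : ReachIn H c u u') :
    ∃ k, PathTo H c s t k := by
  obtain ⟨k, g, h0, hk, hmem, hadj⟩ := reachIn_to_path hr hu
  refine ⟨k + 2, fun i => if i = 0 then s else if i ≤ k + 1 then g (i - 1) else t,
    ?_, ?_, ?_, ?_⟩
  · simp
  · simp only []; rw [if_neg (by omega : ¬ (k + 2 = 0)), if_neg (by omega : ¬ (k + 2 ≤ k + 1))]
  · intro i hi1 hi2
    simp only []
    rw [if_neg (by omega : ¬ (i = 0)), if_pos (by omega : i ≤ k + 1)]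
    exact hmem (i - 1) (by omega)
  · intro i hi
    simp only []
    by_cases h0' : i = 0
    · subst h0'
      rw [if_pos rfl, if_neg (by omega : ¬ (0 + 1 = 0)), if_pos (by omega : 0 + 1 ≤ k + 1)]
      have : (0 + 1 - 1 : ℕ) = 0 := by omega
      rw [this, h0]
      exact hsu
    · by_cases hlast : i = k + 1
      · subst hlast
        rw [if_neg (by omega : ¬ (k + 1 = 0)), if_pos (le_refl (k+1)),
          if_neg (by omega : ¬ (k + 1 + 1 = 0)), if_neg (by omega : ¬ (k + 1 + 1 ≤ k + 1))]
        have : (k + 1 - 1 : ℕ) = k := by omega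
        rw [this, hk]
        exact hu't
      · rw [if_neg h0', if_pos (by omega : i ≤ k + 1), if_neg (by omega : ¬ (i + 1 = 0)),
          if_pos (by omega : i + 1 ≤ k + 1)]
        have : (i + 1 - 1 : ℕ) = i - 1 + 1 := by omega
        rw [this]
        exact hadj (i - 1) (by omega)

lemma exists_min_path {H : SimpleGraph V} {c : Finset V} {s t : V}
    (hex : ∃ k, PathTo H c s t k) (hne : s ≠ t) (hnadj : ¬H.Adj s t) :
    ∃ k, ∃ g : ℕ → V, 2 ≤ k ∧ g 0 = s ∧ g k = t ∧ (∀ i, 0 < i → i < k → g i ∈ c) ∧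
      (∀ i, i < k → H.Adj (g i) (g (i + 1))) ∧
      (∀ i j, i + 1 < j → j ≤ k → ¬H.Adj (g i) (g j)) ∧
      (∀ i j, i < j → j ≤ k → g i ≠ g j) := by
  classical
  have hdec : DecidablePred (fun k => PathTo H c s t k) := Classical.decPred _
  set k := @Nat.find _ hdec hex with hkdef
  obtain ⟨g, h0, hk, hmem, hadj⟩ : PathTo H c s t k := @Nat.find_spec _ hdec hex
  have hk0 : k ≠ 0 := by
    intro h; apply hne; rw [← h0, ← hk, h]
  have hk1 : k ≠ 1 := by
    intro h; apply hnadj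
    have := hadj 0 (by omega)
    rwa [h0, (by rw [h] : g (0 + 1) = g k), hk] at this
  have hk2 : 2 ≤ k := by omega
  have hnochord : ∀ i j, i + 1 < j → j ≤ k → ¬H.Adj (g i) (g j) := by
    intro i j hij hjk hadj'
    set d := j - i - 1 with hd
    have hd1 : 1 ≤ d := by omega
    have hshort : PathTo H c s t (k - d) := by
      refine ⟨fun m => if m ≤ i then g m else g (m + d), ?_, ?_, ?_, ?_⟩
      · simp only []; rw [if_pos (Nat.zero_le i)]; exact h0
      · simp only []
        rw [if_neg (by omega : ¬ (k - d ≤ i))]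
        rw [(by omega : k - d + d = k)]; exact hk
      · intro m hm1 hm2
        simp only []
        by_cases hmi : m ≤ i
        · rw [if_pos hmi]; exact hmem m hm1 (by omega)
        · rw [if_neg hmi]; exact hmem (m + d) (by omega) (by omega)
      · intro m hm
        simp only []
        by_cases hmi : m + 1 ≤ i
        · rw [if_pos (by omega : m ≤ i), if_pos hmi]
          exact hadj m (by omega)
        · by_cases hmi' : m ≤ i
          · -- m = i
            have hmi2 : m = i := by omega
            rw [if_pos hmi', if_neg hmi, hmi2, (by omega : i + 1 + d = j)]
            exact hadj'
          · rw [if_neg hmi', if_neg (by omega : ¬ (m + 1 ≤ i)),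
              (by omega : m + 1 + d = m + d + 1)]
            exact hadj (m + d) (by omega)
    have := @Nat.find_min _ hdec hex (k - d) (by omega)
    exact this hshort
  have hinj : ∀ i j, i < j → j ≤ k → g i ≠ g j := by
    intro i j hij hjk heq
    by_cases hjk' : j < k
    · have h1 := hadj j hjk'
      rw [← heq] at h1
      exact hnochord i (j + 1) (by omega) (by omega) h1
    · have hj : j = k := by omega
      subst hj
      by_cases hi0 : i = 0
      · subst hi0; rw [h0, hk] at heq; exact hne heq
      · have h1 := hadj (i - 1) (by omega)
        rw [(by omega : i - 1 + 1 = i), heq] at h1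
        exact hnochord (i - 1) k (by omega) (le_refl k) h1
  exact ⟨k, g, hk2, h0, hk, hmem, hadj, hnochord, hinj⟩

lemma glue_cycle {H : SimpleGraph V} {Ca Cb : Finset V} {s t : V}
    (hst : s ≠ t)
    (hdisj : ∀ z, z ∈ Ca → z ∈ Cb → False)
    (hsa : s ∉ Ca) (hsb : s ∉ Cb) (hta : t ∉ Ca) (htb : t ∉ Cb)
    (hnoedge : ∀ u ∈ Ca, ∀ w ∈ Cb, ¬H.Adj u w)
    {ka kb : ℕ} {ga gb : ℕ → V}
    (hka : 2 ≤ ka) (ha0 : ga 0 = s) (hak : ga ka = t)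
    (hamem : ∀ i, 0 < i → i < ka → ga i ∈ Ca)
    (haadj : ∀ i, i < ka → H.Adj (ga i) (ga (i + 1)))
    (hanc : ∀ i j, i + 1 < j → j ≤ ka → ¬H.Adj (ga i) (ga j))
    (hainj : ∀ i j, i < j → j ≤ ka → ga i ≠ ga j)
    (hkb : 2 ≤ kb) (hb0 : gb 0 = t) (hbk : gb kb = s)
    (hbmem : ∀ i, 0 < i → i < kb → gb i ∈ Cb)
    (hbadj : ∀ i, i < kb → H.Adj (gb i) (gb (i + 1)))
    (hbnc : ∀ i j, i + 1 < j → j ≤ kb → ¬H.Adj (gb i) (gb j))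
    (hbinj : ∀ i j, i < j → j ≤ kb → gb i ≠ gb j) :
    HasInducedCycle H (ka + kb) := by
  set n := ka + kb with hn
  have hn4 : 4 ≤ n := by omega
  set f' : ℕ → V := fun m => if m ≤ ka then ga m else gb (m - ka) with hf'
  have e1 : ∀ m, m ≤ ka → f' m = ga m := by
    intro m hm; simp only [hf']; rw [if_pos hm]
  have e2 : ∀ m, ka ≤ m → f' m = gb (m - ka) := by
    intro m hm
    rcases eq_or_lt_of_le hm with h | h
    · subst h; simp only [hf']
      rw [if_pos (le_refl ka), hak, Nat.sub_self, hb0]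
    · simp only [hf']; rw [if_neg (by omega)]
  -- injectivity on [0, n)
  have hinj : ∀ i j, i < j → j < n → f' i ≠ f' j := by
    intro i j hij hjn heq
    by_cases hj : j ≤ ka
    · rw [e1 i (by omega), e1 j hj] at heq
      exact hainj i j hij hj heq
    · by_cases hi : ka ≤ i
      · rw [e2 i hi, e2 j (by omega)] at heq
        exact hbinj (i - ka) (j - ka) (by omega) (by omega) heq
      · -- i < ka < j
        rw [e1 i (by omega), e2 j (by omega)] at heq
        have hq1 : 0 < j - ka := by omega
        have hq2 : j - ka < kb := by omega
        have hqb : gb (j - ka) ∈ Cb := hbmem _ hq1 hq2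
        by_cases hi0 : i = 0
        · subst hi0
          rw [ha0, ← hbk] at heq
          exact hbinj (j - ka) kb hq2 (le_refl kb) heq.symm
        · exact hdisj _ (heq ▸ hamem i (by omega) (by omega)) hqb
  -- main adjacency classification for i < j < n
  have hmain : ∀ i j, i < j → j < n →
      (H.Adj (f' i) (f' j) ↔ (j = i + 1 ∨ (i = 0 ∧ j = n - 1))) := by
    intro i j hij hjn
    constructor
    · intro hadj
      by_contra hcon
      push_neg at hcon
      obtain ⟨hne1, hne2⟩ := hcon
      have hij2 : i + 1 < j := by omega
      by_cases hj : j ≤ ka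
      · rw [e1 i (by omega), e1 j hj] at hadj
        exact hanc i j hij2 hj hadj
      · by_cases hi : ka ≤ i
        · rw [e2 i hi, e2 j (by omega)] at hadj
          exact hbnc (i - ka) (j - ka) (by omega) (by omega) hadj
        · rw [e1 i (by omega), e2 j (by omega)] at hadj
          have hq1 : 0 < j - ka := by omega
          have hq2 : j - ka < kb := by omega
          have hqb : gb (j - ka) ∈ Cb := hbmem _ hq1 hq2
          by_cases hi0 : i = 0
          · subst hi0
            rw [ha0, ← hbk] at hadj
            have hj' : j ≠ n - 1 := fun h => hne2 rfl h
            exact hbnc (j - ka) kb (by omega) (le_refl kb) hadj.symm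
          · exact hnoedge _ (hamem i (by omega) (by omega)) _ hqb hadj
    · rintro (hj1 | ⟨hi0, hj1⟩)
      · -- consecutive
        subst hj1
        by_cases hi : i + 1 ≤ ka
        · rw [e1 i (by omega), e1 (i+1) hi]
          exact haadj i (by omega)
        · rw [e2 i (by omega), e2 (i+1) (by omega)]
          rw [(by omega : i + 1 - ka = (i - ka) + 1)]
          exact hbadj (i - ka) (by omega)
      · -- wrap: 0 and n-1
        subst hi0; subst hj1
        rw [e1 0 (by omega), e2 (n-1) (by omega), ha0, ← hbk,
          (by omega : n - 1 - ka = kb - 1)]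
        have h1 := hbadj (kb - 1) (by omega)
        rw [(by omega : kb - 1 + 1 = kb)] at h1
        exact h1.symm
  -- mod helper
  have hmod : ∀ p q : ℕ, p < n → q < n → (((p + 1) % n = q) ↔ (q = p + 1 ∨ (p = n - 1 ∧ q = 0))) := by
    intro p q hp hq
    by_cases h : p + 1 < n
    · rw [Nat.mod_eq_of_lt h]; omega
    · have hpn : p + 1 = n := by omega
      rw [hpn, Nat.mod_self]; omega
  refine ⟨fun m => f' (m : ℕ), ?_, ?_⟩
  · intro i j heq
    rcases Nat.lt_trichotomy (i : ℕ) (j : ℕ) with h | h | h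
    · exact absurd heq (hinj _ _ h j.isLt)
    · exact Fin.ext h
    · exact absurd heq.symm (hinj _ _ h i.isLt)
  · intro i j
    rcases Nat.lt_trichotomy (i : ℕ) (j : ℕ) with h | h | h
    · rw [hmain _ _ h j.isLt, hmod _ _ i.isLt j.isLt, hmod _ _ j.isLt i.isLt]
      have hi := i.isLt; have hj := j.isLt
      omega
    · have hij : i = j := Fin.ext h
      subst hij
      rw [hmod _ _ i.isLt i.isLt]
      have hi := i.isLt
      constructor
      · intro had; exact absurd had H.irrefl
      · intro hor; exfalso; rcases hor with h1 | h1 <;> omega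
    · have hcomm : H.Adj (f' (i:ℕ)) (f' (j:ℕ)) ↔ H.Adj (f' (j:ℕ)) (f' (i:ℕ)) :=
        ⟨fun h => h.symm, fun h => h.symm⟩
      rw [hcomm, hmain _ _ h i.isLt, hmod _ _ i.isLt j.isLt, hmod _ _ j.isLt i.isLt]
      have hi := i.isLt; have hj := j.isLt
      omega

def SimpIn (H : SimpleGraph V) (U : Finset V) (x : V) : Prop :=
  ∀ u ∈ U, ∀ v ∈ U, H.Adj x u → H.Adj x v → u ≠ v → H.Adj u v

def DiracStmt (H : SimpleGraph V) (U : Finset V) : Prop :=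
  (∀ u ∈ U, ∀ v ∈ U, u ≠ v → H.Adj u v) ∨
    ∃ x ∈ U, ∃ y ∈ U, x ≠ y ∧ ¬H.Adj x y ∧ SimpIn H U x ∧ SimpIn H U y

lemma side_simp {H : SimpleGraph V} {U : Finset V} {a b : V} {S : Finset V}
    (ih : ∀ W : Finset V, W ⊂ U → W.Nonempty → DiracStmt H W)
    (haU : a ∈ U) (hbU : b ∈ U)
    (hSsub : S ⊆ (U.erase a).erase b)
    (hsep : ¬ ReachIn H (U \ S) a b)
    (hclique : ∀ p ∈ S, ∀ q ∈ S, p ≠ q → H.Adj p q) :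
    ∃ x, x ∈ U \ S ∧ ReachIn H (U \ S) a x ∧ SimpIn H U x := by
  classical
  have haS : a ∉ S := fun h => (Finset.mem_erase.1 (Finset.mem_erase.1 (hSsub h)).2).1 rfl
  have hbS : b ∉ S := fun h => (Finset.mem_erase.1 (hSsub h)).1 rfl
  have haMem : a ∈ U \ S := Finset.mem_sdiff.2 ⟨haU, haS⟩
  set Ca := (U \ S).filter (fun z => ReachIn H (U \ S) a z) with hCadef
  have memCa : ∀ z, z ∈ Ca ↔ z ∈ U \ S ∧ ReachIn H (U \ S) a z := by
    intro z; rw [hCadef, Finset.mem_filter]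
  have haCa : a ∈ Ca := (memCa a).2 ⟨haMem, Relation.ReflTransGen.refl⟩
  have hcc : ∀ u, u ∈ Ca → ∀ w, w ∈ U → w ∉ S → H.Adj u w → w ∈ Ca := by
    intro u hu w hwU hwS hadj
    obtain ⟨huMem, hur⟩ := (memCa u).1 hu
    exact (memCa w).2 ⟨Finset.mem_sdiff.2 ⟨hwU, hwS⟩,
      hur.tail ⟨huMem, Finset.mem_sdiff.2 ⟨hwU, hwS⟩, hadj⟩⟩
  have hbCa : b ∉ Ca := by
    intro h; exact hsep ((memCa b).1 h).2
  set Ua := Ca ∪ S with hUadef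
  have hUasub : Ua ⊆ U := by
    intro z hz
    rcases Finset.mem_union.1 hz with h | h
    · exact (Finset.mem_sdiff.1 ((memCa z).1 h).1).1
    · exact Finset.mem_of_mem_erase (Finset.mem_of_mem_erase (hSsub h))
  have hbUa : b ∉ Ua := by
    intro h
    rcases Finset.mem_union.1 h with h | h
    · exact hbCa h
    · exact hbS h
  have hUalt : Ua ⊂ U := ⟨hUasub, fun h => hbUa (h hbU)⟩
  have hUane : Ua.Nonempty := ⟨a, Finset.mem_union_left _ haCa⟩
  have hN : ∀ x, x ∈ Ca → ∀ u ∈ U, H.Adj x u → u ∈ Ua := by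
    intro x hx u huU hadj
    by_cases huS : u ∈ S
    · exact Finset.mem_union_right _ huS
    · exact Finset.mem_union_left _ (hcc x hx u huU huS hadj)
  rcases ih Ua hUalt hUane with hcomp | ⟨x, hxUa, y, hyUa, hxy, hnxy, hsx, hsy⟩
  · refine ⟨a, haMem, Relation.ReflTransGen.refl, ?_⟩
    intro u huU v hvU hau hav huv
    exact hcomp u (hN a haCa u huU hau) v (hN a haCa v hvU hav) huv
  · have key : ∀ z, z ∈ Ca → SimpIn H Ua z → ∃ x, x ∈ U \ S ∧ ReachIn H (U \ S) a x ∧ SimpIn H U x := by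
      intro z hz hs
      refine ⟨z, ((memCa z).1 hz).1, ((memCa z).1 hz).2, ?_⟩
      intro u huU v hvU hzu hzv huv
      exact hs u (hN z hz u huU hzu) v (hN z hz v hvU hzv) hzu hzv huv
    by_cases hx : x ∈ Ca
    · exact key x hx hsx
    · have hxS : x ∈ S := by
        rcases Finset.mem_union.1 hxUa with h | h
        · exact absurd h hx
        · exact h
      by_cases hy : y ∈ Ca
      · exact key y hy hsy
      · have hyS : y ∈ S := by
          rcases Finset.mem_union.1 hyUa with h | h
          · exact absurd h hy
          · exact h
        exact absurd (hclique x hxS y hyS hxy) hnxy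

lemma dirac {H : SimpleGraph V} (hH : Chordal H) (U : Finset V) : U.Nonempty → DiracStmt H U := by
  classical
  induction U using Finset.strongInduction with
  | _ U ih =>
    intro hUne
    by_cases hcomp : ∀ u ∈ U, ∀ v ∈ U, u ≠ v → H.Adj u v
    · exact Or.inl hcomp
    · push_neg at hcomp
      obtain ⟨a, haU, b, hbU, hab, hnadj⟩ := hcomp
      set SepP : Finset V → Prop := fun S => ¬ ReachIn H (U \ S) a b with hSepP
      -- the full erase-set separates
      have hSep0 : SepP ((U.erase a).erase b) := by
        rw [hSepP]
        intro h
        have htwo : ∀ z, z ∈ U \ (U.erase a).erase b → z = a ∨ z = b := by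
          intro z hz
          obtain ⟨hzU, hz2⟩ := Finset.mem_sdiff.1 hz
          rw [Finset.mem_erase, Finset.mem_erase] at hz2
          push_neg at hz2
          by_cases hza : z = a
          · exact Or.inl hza
          · by_cases hzb : z = b
            · exact Or.inr hzb
            · exact absurd hzU (hz2 hzb hza)
        have := reachIn_closure (P := fun z => z = a) rfl (by
          rintro p q ⟨hp, hq, hadj⟩ rfl
          rcases htwo q hq with h | h
          · subst h; exact absurd hadj H.irrefl
          · subst h; exact absurd hadj hnadj) h
        exact hab this.symm
      -- minimal separator
      set cand := ((U.erase a).erase b).powerset.filter SepP with hcand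
      have hcandne : cand.Nonempty :=
        ⟨(U.erase a).erase b, Finset.mem_filter.2 ⟨Finset.mem_powerset_self _, hSep0⟩⟩
      obtain ⟨S, hScand, hSmin⟩ := Finset.exists_min_image cand Finset.card hcandne
      have hSsub : S ⊆ (U.erase a).erase b := Finset.mem_powerset.1 (Finset.mem_filter.1 hScand).1
      have hsep : ¬ ReachIn H (U \ S) a b := (Finset.mem_filter.1 hScand).2
      have hmin' : ∀ s' ∈ S, ReachIn H (U \ (S.erase s')) a b := by
        intro s' hs'
        by_contra hno
        have : S.erase s' ∈ cand := Finset.mem_filter.2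
          ⟨Finset.mem_powerset.2 ((Finset.erase_subset s' S).trans hSsub), hno⟩
        have := hSmin _ this
        rw [Finset.card_erase_of_mem hs'] at this
        have hpos : 0 < S.card := Finset.card_pos.2 ⟨s', hs'⟩
        omega
      have haS : a ∉ S := fun h => (Finset.mem_erase.1 (Finset.mem_erase.1 (hSsub h)).2).1 rfl
      have hbS : b ∉ S := fun h => (Finset.mem_erase.1 (hSsub h)).1 rfl
      have haMem : a ∈ U \ S := Finset.mem_sdiff.2 ⟨haU, haS⟩
      have hbMem : b ∈ U \ S := Finset.mem_sdiff.2 ⟨hbU, hbS⟩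
      set Ca := (U \ S).filter (fun z => ReachIn H (U \ S) a z) with hCadef
      set Cb := (U \ S).filter (fun z => ReachIn H (U \ S) b z) with hCbdef
      have memCa : ∀ z, z ∈ Ca ↔ z ∈ U \ S ∧ ReachIn H (U \ S) a z := by
        intro z; rw [hCadef, Finset.mem_filter]
      have memCb : ∀ z, z ∈ Cb ↔ z ∈ U \ S ∧ ReachIn H (U \ S) b z := by
        intro z; rw [hCbdef, Finset.mem_filter]
      have haCa : a ∈ Ca := (memCa a).2 ⟨haMem, Relation.ReflTransGen.refl⟩
      have hbCb : b ∈ Cb := (memCb b).2 ⟨hbMem, Relation.ReflTransGen.refl⟩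
      have hccA : ∀ u, u ∈ Ca → ∀ w, w ∈ U → w ∉ S → H.Adj u w → w ∈ Ca := by
        intro u hu w hwU hwS hadj
        obtain ⟨huMem, hur⟩ := (memCa u).1 hu
        exact (memCa w).2 ⟨Finset.mem_sdiff.2 ⟨hwU, hwS⟩,
          hur.tail ⟨huMem, Finset.mem_sdiff.2 ⟨hwU, hwS⟩, hadj⟩⟩
      have hccB : ∀ u, u ∈ Cb → ∀ w, w ∈ U → w ∉ S → H.Adj u w → w ∈ Cb := by
        intro u hu w hwU hwS hadj
        obtain ⟨huMem, hur⟩ := (memCb u).1 hu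
        exact (memCb w).2 ⟨Finset.mem_sdiff.2 ⟨hwU, hwS⟩,
          hur.tail ⟨huMem, Finset.mem_sdiff.2 ⟨hwU, hwS⟩, hadj⟩⟩
      have hbCa : b ∉ Ca := fun h => hsep ((memCa b).1 h).2
      have haCb : a ∉ Cb := fun h => hsep (reachIn_symm ((memCb a).1 h).2)
      have hdisjC : ∀ z, z ∈ Ca → z ∈ Cb → False := by
        intro z h1 h2
        exact hsep (((memCa z).1 h1).2.trans (reachIn_symm ((memCb z).1 h2).2))
      have hnoedge : ∀ u ∈ Ca, ∀ w ∈ Cb, ¬H.Adj u w := by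
        intro u hu w hw hadj
        obtain ⟨hwMem, _⟩ := (memCb w).1 hw
        obtain ⟨hwU, hwS⟩ := Finset.mem_sdiff.1 hwMem
        exact hdisjC w (hccA u hu w hwU hwS hadj) hw
      -- every separator vertex has neighbors in both components
      have hnbrA : ∀ s' ∈ S, ∃ u ∈ Ca, H.Adj s' u := by
        intro s' hs'
        by_contra hno
        push_neg at hno
        have hreach := hmin' s' hs'
        have : b ∈ Ca := by
          refine reachIn_closure (P := fun z => z ∈ Ca) haCa ?_ hreach
          rintro p q ⟨hp, hq, hadj⟩ hpCa
          by_cases hqs : q = s'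
          · subst hqs
            exact absurd hadj.symm (hno p hpCa)
          · obtain ⟨hqU, hq2⟩ := Finset.mem_sdiff.1 hq
            have hqS : q ∉ S := by
              intro h
              exact hq2 (Finset.mem_erase.2 ⟨hqs, h⟩)
            exact hccA p hpCa q hqU hqS hadj
        exact hbCa this
      have hnbrB : ∀ s' ∈ S, ∃ u ∈ Cb, H.Adj s' u := by
        intro s' hs'
        by_contra hno
        push_neg at hno
        have hreach := reachIn_symm (hmin' s' hs')
        have : a ∈ Cb := by
          refine reachIn_closure (P := fun z => z ∈ Cb) hbCb ?_ hreach
          rintro p q ⟨hp, hq, hadj⟩ hpCb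
          by_cases hqs : q = s'
          · subst hqs
            exact absurd hadj.symm (hno p hpCb)
          · obtain ⟨hqU, hq2⟩ := Finset.mem_sdiff.1 hq
            have hqS : q ∉ S := by
              intro h
              exact hq2 (Finset.mem_erase.2 ⟨hqs, h⟩)
            exact hccB p hpCb q hqU hqS hadj
        exact haCb this
      -- reach within the component
      have hreachCompA : ∀ u, u ∈ Ca → ReachIn H Ca a u := by
        intro u hu
        have h := ((memCa u).1 hu).2
        have := reachIn_closure (P := fun z => ReachIn H Ca a z ∧ z ∈ Ca)
          ⟨Relation.ReflTransGen.refl, haCa⟩ ?_ h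
        · exact this.1
        · rintro p q ⟨hp, hq, hadj⟩ ⟨hrpa, hpCa⟩
          obtain ⟨hqU, hqS⟩ := Finset.mem_sdiff.1 hq
          have hqCa : q ∈ Ca := hccA p hpCa q hqU hqS hadj
          exact ⟨hrpa.tail ⟨hpCa, hqCa, hadj⟩, hqCa⟩
      have hreachCompB : ∀ u, u ∈ Cb → ReachIn H Cb b u := by
        intro u hu
        have h := ((memCb u).1 hu).2
        have := reachIn_closure (P := fun z => ReachIn H Cb b z ∧ z ∈ Cb)
          ⟨Relation.ReflTransGen.refl, hbCb⟩ ?_ h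
        · exact this.1
        · rintro p q ⟨hp, hq, hadj⟩ ⟨hrpb, hpCb⟩
          obtain ⟨hqU, hqS⟩ := Finset.mem_sdiff.1 hq
          have hqCb : q ∈ Cb := hccB p hpCb q hqU hqS hadj
          exact ⟨hrpb.tail ⟨hpCb, hqCb, hadj⟩, hqCb⟩
      -- the separator is a clique
      have hclique : ∀ p ∈ S, ∀ q ∈ S, p ≠ q → H.Adj p q := by
        intro s' hs' t' ht' hne
        by_contra hnadj'
        obtain ⟨u1, hu1, hadj1⟩ := hnbrA s' hs'
        obtain ⟨u2, hu2, hadj2⟩ := hnbrA t' ht'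
        obtain ⟨v1, hv1, hadjv1⟩ := hnbrB s' hs'
        obtain ⟨v2, hv2, hadjv2⟩ := hnbrB t' ht'
        have hexa : ∃ k, PathTo H Ca s' t' k :=
          pathTo_of_ends hadj1 hadj2.symm hu1
            ((reachIn_symm (hreachCompA u1 hu1)).trans (hreachCompA u2 hu2))
        have hexb : ∃ k, PathTo H Cb t' s' k :=
          pathTo_of_ends hadjv2 hadjv1.symm hv2
            ((reachIn_symm (hreachCompB v2 hv2)).trans (hreachCompB v1 hv1))
        obtain ⟨ka, ga, hka, ha0, hak, hamem, haadj, hanc, hainj⟩ :=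
          exists_min_path hexa hne hnadj'
        obtain ⟨kb, gb, hkb, hb0, hbk, hbmem, hbadj, hbnc, hbinj⟩ :=
          exists_min_path hexb (Ne.symm hne) (fun h => hnadj' h.symm)
        have hsCa : s' ∉ Ca := fun h => (Finset.mem_sdiff.1 ((memCa s').1 h).1).2 hs'
        have hsCb : s' ∉ Cb := fun h => (Finset.mem_sdiff.1 ((memCb s').1 h).1).2 hs'
        have htCa : t' ∉ Ca := fun h => (Finset.mem_sdiff.1 ((memCa t').1 h).1).2 ht'
        have htCb : t' ∉ Cb := fun h => (Finset.mem_sdiff.1 ((memCb t').1 h).1).2 ht'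
        have hcyc := glue_cycle hne hdisjC hsCa hsCb htCa htCb hnoedge
          hka ha0 hak hamem haadj hanc hainj hkb hb0 hbk hbmem hbadj hbnc hbinj
        exact hH (ka + kb) (by omega) hcyc
      -- apply the side lemma on both sides
      have ih' : ∀ W : Finset V, W ⊂ U → W.Nonempty → DiracStmt H W := fun W hW => ih W hW
      obtain ⟨x, hxUS, hxreach, hxsimp⟩ := side_simp ih' haU hbU hSsub hsep hclique
      have hSsub' : S ⊆ (U.erase b).erase a := by
        intro z hz
        have h1 := Finset.mem_erase.1 (hSsub hz)
        have h2 := Finset.mem_erase.1 h1.2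
        exact Finset.mem_erase.2 ⟨h2.1, Finset.mem_erase.2 ⟨h1.1, h2.2⟩⟩
      have hsep' : ¬ ReachIn H (U \ S) b a := fun h => hsep (reachIn_symm h)
      obtain ⟨y, hyUS, hyreach, hysimp⟩ := side_simp ih' hbU haU hSsub' hsep' hclique
      have hxy : x ≠ y := by
        rintro rfl
        exact hsep (hxreach.trans (reachIn_symm hyreach))
      have hnxy : ¬H.Adj x y := by
        intro hadj
        exact hsep ((hxreach.tail ⟨hxUS, hyUS, hadj⟩).trans (reachIn_symm hyreach))
      exact Or.inr ⟨x, (Finset.mem_sdiff.1 hxUS).1, y, (Finset.mem_sdiff.1 hyUS).1,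
        hxy, hnxy, hxsimp, hysimp⟩

lemma exists_simplicial {H : SimpleGraph V} (hH : Chordal H) (U : Finset V)
    (hU : U.Nonempty) : ∃ x ∈ U, SimpIn H U x := by
  rcases dirac hH U hU with hcomp | ⟨x, hx, _, _, _, _, hs, _⟩
  · obtain ⟨a, ha⟩ := hU
    exact ⟨a, ha, fun u hu v hv _ _ huv => hcomp u hu v hv huv⟩
  · exact ⟨x, hx, hs⟩

lemma supp_nonempty_of_mem {G : SimpleGraph V} {U A F : Finset V} {r : ℕ}
    (hr : 1 ≤ r) (hF : F ∈ Supp G U A r) : F.Nonempty := by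
  obtain ⟨_, hcard, _, _⟩ := hF
  exact Finset.card_pos.1 (by omega)

lemma face_sub_card {G : SimpleGraph V} {U A F : Finset V} {r : ℕ}
    (hA : A ⊆ U) (hF : F ∈ Supp G U A r) : ((U \ F) \ A).card = U.card - r - A.card := by
  obtain ⟨hFU, hcard, hdisj, _⟩ := hF
  have h1 : (U \ F) \ A = U \ (F ∪ A) := by
    ext z; simp only [mem_sdiff, mem_union]; tauto
  have h2 : F ∪ A ⊆ U := union_subset hFU hA
  have h3 : (F ∪ A).card = r + A.card := by
    rw [Finset.card_union_of_disjoint (Finset.disjoint_iff_inter_eq_empty.2 hdisj), hcard]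
  rw [h1, Finset.card_sdiff_of_subset h2, h3]
  omega

lemma face_card_le {G : SimpleGraph V} {U A H : Finset V} {r : ℕ}
    (hA : A ⊆ U) (hH : H ∈ SigmaC G U A r) : H.card ≤ U.card - r - A.card := by
  obtain ⟨F, hF, hsub⟩ := hH
  calc H.card ≤ ((U \ F) \ A).card := Finset.card_le_card hsub
    _ = _ := face_sub_card hA hF

lemma delC_eq {G : SimpleGraph V} {U A : Finset V} {x : V} {r : ℕ}
    (hxU : x ∈ U) (hxA : x ∉ A)
    (hshed : ∀ F ∈ Supp G U A (r + 1), x ∉ F →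
      ∃ v ∈ F, ConnOn G ((F.erase v) ∪ (insert x A))) :
    delC (SigmaC G U A (r + 1)) x = SigmaC G U (insert x A) r := by
  ext H
  constructor
  · rintro ⟨⟨F, ⟨hFU, hFcard, hFdisj, hFconn⟩, hsub⟩, hxH⟩
    by_cases hxF : x ∈ F
    · refine ⟨F.erase x, ⟨(Finset.erase_subset x F).trans hFU, ?_, ?_, ?_⟩, ?_⟩
      · rw [Finset.card_erase_of_mem hxF, hFcard]; omega
      · ext z
        simp only [Finset.mem_inter, Finset.mem_erase, Finset.mem_insert, Finset.notMem_empty,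
          iff_false]
        rintro ⟨⟨hzx, hzF⟩, (h | h)⟩
        · exact hzx h
        · have : z ∈ F ∩ A := Finset.mem_inter.2 ⟨hzF, h⟩
          rw [hFdisj] at this; simp at this
      · have heq : F.erase x ∪ insert x A = F ∪ A := by
          ext z
          simp only [Finset.mem_union, Finset.mem_erase, Finset.mem_insert]
          constructor
          · rintro (⟨_, h⟩ | (rfl | h))
            · exact Or.inl h
            · exact Or.inl hxF
            · exact Or.inr h
          · rintro (h | h)
            · by_cases hzx : z = x
              · exact Or.inr (Or.inl hzx)
              · exact Or.inl ⟨hzx, h⟩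
            · exact Or.inr (Or.inr h)
        rwa [heq]
      · intro z hz
        have hz' := hsub hz
        simp only [Finset.mem_sdiff] at hz' ⊢
        simp only [Finset.mem_erase, Finset.mem_insert]
        have hzx : z ≠ x := fun h => hxH (h ▸ hz)
        refine ⟨⟨hz'.1.1, fun h => hz'.1.2 h.2⟩, ?_⟩
        rintro (h | h)
        · exact hzx h
        · exact hz'.2 h
    · obtain ⟨v, hv, hconn⟩ := hshed F ⟨hFU, hFcard, hFdisj, hFconn⟩ hxF
      refine ⟨F.erase v, ⟨(Finset.erase_subset v F).trans hFU, ?_, ?_, hconn⟩, ?_⟩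
      · rw [Finset.card_erase_of_mem hv, hFcard]; omega
      · ext z
        simp only [Finset.mem_inter, Finset.mem_erase, Finset.mem_insert, Finset.notMem_empty,
          iff_false]
        rintro ⟨⟨hzv, hzF⟩, (rfl | h)⟩
        · exact hxF hzF
        · have : z ∈ F ∩ A := Finset.mem_inter.2 ⟨hzF, h⟩
          rw [hFdisj] at this; simp at this
      · intro z hz
        have hz' := hsub hz
        simp only [Finset.mem_sdiff] at hz' ⊢
        simp only [Finset.mem_erase, Finset.mem_insert]
        have hzx : z ≠ x := fun h => hxH (h ▸ hz)
        refine ⟨⟨hz'.1.1, fun h => hz'.1.2 h.2⟩, ?_⟩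
        rintro (h | h)
        · exact hzx h
        · exact hz'.2 h
  · rintro ⟨S, ⟨hSU, hScard, hSdisj, hSconn⟩, hsub⟩
    have hxS : x ∉ S := by
      intro h
      have : x ∈ S ∩ insert x A := Finset.mem_inter.2 ⟨h, Finset.mem_insert_self x A⟩
      rw [hSdisj] at this; simp at this
    have hxH : x ∉ H := by
      intro h
      exact absurd (hsub h) (by simp [Finset.mem_sdiff])
    refine ⟨⟨insert x S, ⟨Finset.insert_subset hxU hSU, ?_, ?_, ?_⟩, ?_⟩, hxH⟩
    · rw [Finset.card_insert_of_notMem hxS, hScard]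
    · ext z
      simp only [Finset.mem_inter, Finset.mem_insert, Finset.notMem_empty, iff_false]
      rintro ⟨(rfl | h), hzA⟩
      · exact hxA hzA
      · have : z ∈ S ∩ insert x A := Finset.mem_inter.2 ⟨h, Finset.mem_insert_of_mem hzA⟩
        rw [hSdisj] at this; simp at this
    · have heq : insert x S ∪ A = S ∪ insert x A := by
        ext z
        simp only [Finset.mem_union, Finset.mem_insert]
        tauto
      rwa [heq]
    · intro z hz
      have hz' := hsub hz
      simp only [Finset.mem_sdiff, Finset.mem_insert, not_or] at hz' ⊢
      exact ⟨⟨hz'.1.1, hz'.2.1, hz'.1.2⟩, hz'.2.2⟩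

lemma linkC_eq {G : SimpleGraph V} {U A : Finset V} {x : V} {r : ℕ}
    (hxU : x ∈ U) (hxA : x ∉ A) :
    linkC (SigmaC G U A r) x = SigmaC G (U.erase x) A r := by
  ext H
  constructor
  · rintro ⟨hH, hxH, ⟨F, ⟨hFU, hFcard, hFdisj, hFconn⟩, hsub2⟩⟩
    have hxF : x ∉ F := by
      intro h
      have := hsub2 (Finset.mem_insert_self x H)
      simp only [Finset.mem_sdiff] at this
      exact this.1.2 h
    refine ⟨F, ⟨?_, hFcard, hFdisj, hFconn⟩, ?_⟩
    · intro z hz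
      exact Finset.mem_erase.2 ⟨fun h => hxF (h ▸ hz), hFU hz⟩
    · intro z hz
      have hz' := hsub2 (Finset.mem_insert_of_mem hz)
      simp only [Finset.mem_sdiff, Finset.mem_erase] at hz' ⊢
      exact ⟨⟨⟨fun h => hxH (h ▸ hz), hz'.1.1⟩, hz'.1.2⟩, hz'.2⟩
  · rintro ⟨F, ⟨hFU, hFcard, hFdisj, hFconn⟩, hsub⟩
    have hFU' : F ⊆ U := hFU.trans (Finset.erase_subset x U)
    have hxF : x ∉ F := fun h => (Finset.mem_erase.1 (hFU h)).1 rfl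
    have hxH : x ∉ H := by
      intro h
      have := hsub h
      simp only [Finset.mem_sdiff, Finset.mem_erase] at this
      exact this.1.1.1 rfl
    have hsub' : H ⊆ (U \ F) \ A := by
      intro z hz
      have hz' := hsub hz
      simp only [Finset.mem_sdiff, Finset.mem_erase] at hz' ⊢
      exact ⟨⟨hz'.1.1.2, hz'.1.2⟩, hz'.2⟩
    refine ⟨⟨F, ⟨hFU', hFcard, hFdisj, hFconn⟩, hsub'⟩, hxH, ⟨F, ⟨hFU', hFcard, hFdisj, hFconn⟩, ?_⟩⟩
    intro z hz
    rcases Finset.mem_insert.1 hz with rfl | hz'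
    · simp only [Finset.mem_sdiff]
      exact ⟨⟨hxU, hxF⟩, hxA⟩
    · exact hsub' hz'

lemma shedding_of_key {G : SimpleGraph V} {U A : Finset V} {x : V} {r : ℕ}
    (hA : A ⊆ U) (hxU : x ∈ U) (hxA : x ∉ A) (hr : 1 ≤ r)
    (hshed : ∀ F ∈ Supp G U A r, x ∉ F →
      ∃ v ∈ F, ConnOn G ((F.erase v) ∪ (insert x A))) :
    IsShedding (SigmaC G U A r) x := by
  intro F' hFacet
  obtain ⟨⟨hF'mem, hxF'⟩, hmax⟩ := hFacet
  obtain ⟨F, hF, hsub⟩ := hF'mem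
  -- find a full-size facet of delC containing F'
  have hW : ∃ F2 ∈ Supp G U A r, x ∈ F2 ∧ F' ⊆ (U \ F2) \ A := by
    by_cases hxF : x ∈ F
    · exact ⟨F, hF, hxF, hsub⟩
    · obtain ⟨v, hv, hconn⟩ := hshed F hF hxF
      obtain ⟨hFU, hFcard, hFdisj, hFconn⟩ := hF
      refine ⟨insert x (F.erase v), ⟨?_, ?_, ?_, ?_⟩, Finset.mem_insert_self _ _, ?_⟩
      · exact Finset.insert_subset hxU ((Finset.erase_subset v F).trans hFU)
      · rw [Finset.card_insert_of_notMem (fun h => hxF (Finset.mem_of_mem_erase h)),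
          Finset.card_erase_of_mem hv, hFcard]
        omega
      · ext z
        simp only [Finset.mem_inter, Finset.mem_insert, Finset.mem_erase, Finset.notMem_empty,
          iff_false]
        rintro ⟨(rfl | ⟨hzv, hzF⟩), hzA⟩
        · exact hxA hzA
        · have : z ∈ F ∩ A := Finset.mem_inter.2 ⟨hzF, hzA⟩
          rw [hFdisj] at this; simp at this
      · have heq : insert x (F.erase v) ∪ A = (F.erase v) ∪ insert x A := by
          ext z
          simp only [Finset.mem_union, Finset.mem_insert, Finset.mem_erase]
          tauto
        rwa [heq]
      · intro z hz
        have hz' := hsub hz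
        simp only [Finset.mem_sdiff, Finset.mem_insert, Finset.mem_erase] at hz' ⊢
        have hzx : z ≠ x := fun h => hxF' (h ▸ hz)
        push_neg
        exact ⟨⟨hz'.1.1, hzx, fun _ => hz'.1.2⟩, hz'.2⟩
  obtain ⟨F2, hF2, hxF2, hsubW⟩ := hW
  set W := (U \ F2) \ A with hWdef
  have hWdel : W ∈ delC (SigmaC G U A r) x := by
    refine ⟨⟨F2, hF2, subset_rfl⟩, ?_⟩
    intro h
    simp only [hWdef, Finset.mem_sdiff] at h
    exact h.1.2 hxF2
  have hF'W : F' = W := hmax W hWdel hsubW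
  have hcard : F'.card = U.card - r - A.card := by
    rw [hF'W, hWdef]
    exact face_sub_card hA hF2
  refine ⟨⟨F, hF, hsub⟩, ?_⟩
  intro K hK hsubK
  apply Finset.eq_of_subset_of_card_le hsubK
  rw [hcard]
  exact face_card_le hA hK

lemma sigma_zero_conn {G : SimpleGraph V} {U A : Finset V} (h : ConnOn G A) :
    SigmaC G U A 0 = {t | t ⊆ U \ A} := by
  ext H
  constructor
  · rintro ⟨F, ⟨hFU, hFcard, hFdisj, hFconn⟩, hsub⟩
    intro z hz
    have := hsub hz
    simp only [Finset.mem_sdiff] at this ⊢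
    exact ⟨this.1.1, this.2⟩
  · intro hsub
    refine ⟨∅, ⟨Finset.empty_subset U, Finset.card_empty, by simp, by rwa [Finset.empty_union]⟩, ?_⟩
    rwa [Finset.sdiff_empty]

lemma sigma_empty_of_no_supp {G : SimpleGraph V} {U A : Finset V} {r : ℕ}
    (h : ∀ F, F ∉ Supp G U A r) : SigmaC G U A r = ∅ := by
  ext H
  simp only [Set.mem_empty_iff_false, iff_false]
  rintro ⟨F, hF, _⟩
  exact h F hF

theorem mainVD {G : SimpleGraph V} (hch : Chordal Gᶜ) :
    ∀ (n : ℕ) (U A : Finset V) (r : ℕ), U.card + r ≤ n → A ⊆ U →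
      (A = ∅ → 2 ≤ r) → (A.Nonempty → ConnOn G A) → VD (SigmaC G U A r) := by
  intro n
  induction n using Nat.strong_induction_on with
  | _ n ih =>
    intro U A r hn hAU hA2 hAconn
    cases r with
    | zero =>
        rcases Finset.eq_empty_or_nonempty A with rfl | hAne
        · exact absurd (hA2 rfl) (by omega)
        · rw [sigma_zero_conn (hAconn hAne)]
          exact VD.simplex (U \ A)
    | succ r' =>
        by_cases hne : ∃ F, F ∈ Supp G U A (r' + 1)
        · obtain ⟨F0, hF0⟩ := hne
          obtain ⟨hF0U, hF0card, hF0disj, hF0conn⟩ := hF0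
          have hF0ne : F0.Nonempty := Finset.card_pos.1 (by omega)
          have hxdata : ∃ x, x ∈ U ∧ x ∉ A ∧ ConnOn G (insert x A) ∧
              (∀ F ∈ Supp G U A (r' + 1), x ∉ F →
                ∃ v ∈ F, ConnOn G ((F.erase v) ∪ (insert x A))) := by
            rcases Finset.eq_empty_or_nonempty A with rfl | hAne
            · have hr2 : 2 ≤ r' + 1 := hA2 rfl
              obtain ⟨z0, hz0⟩ := hF0ne
              obtain ⟨x, hxU, hsimp⟩ := exists_simplicial hch U ⟨z0, hF0U hz0⟩
              refine ⟨x, hxU, Finset.notMem_empty x, connOn_singleton G x, ?_⟩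
              intro F hF hxF
              obtain ⟨hFU, hFcard, _, hFconn⟩ := hF
              rw [Finset.union_empty] at hFconn
              obtain ⟨u, hu, v, hv, hadjuv⟩ := exists_edge_of_connOn hFconn (by omega)
              have hxf : ∃ f ∈ F, G.Adj x f := by
                by_contra hno
                push_neg at hno
                have h1 : Gᶜ.Adj x u :=
                  (SimpleGraph.compl_adj G x u).2 ⟨fun h => hxF (h ▸ hu), hno u hu⟩
                have h2 : Gᶜ.Adj x v :=
                  (SimpleGraph.compl_adj G x v).2 ⟨fun h => hxF (h ▸ hv), hno v hv⟩
                have := hsimp u (hFU hu) v (hFU hv) h1 h2 hadjuv.ne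
                exact ((SimpleGraph.compl_adj G u v).1 this).2 hadjuv
              obtain ⟨f, hf, hadjxf⟩ := hxf
              have hconnFx : ConnOn G (F ∪ {x}) := by
                have h := connOn_insert hFconn hf hadjxf
                have heq : F ∪ {x} = insert x F := by
                  ext z; simp [or_comm]
                rwa [heq]
              have hdisjFx : F ∩ {x} = ∅ := by
                ext z
                simp only [Finset.mem_inter, Finset.mem_singleton, Finset.notMem_empty, iff_false]
                rintro ⟨h1, rfl⟩
                exact hxF h1
              obtain ⟨v', hv', hcv⟩ := key_removable F.card F {x} rfl ⟨f, hf⟩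
                (Finset.singleton_nonempty x) hdisjFx (connOn_singleton G x) hconnFx
              exact ⟨v', hv', hcv⟩
            · have hAconn' := hAconn hAne
              obtain ⟨x, hxF0, a0, ha0, hadj⟩ := exists_cross_adj hF0conn hF0ne hAne hF0disj
              have hxU := hF0U hxF0
              have hxA : x ∉ A := by
                intro h
                have : x ∈ F0 ∩ A := Finset.mem_inter.2 ⟨hxF0, h⟩
                rw [hF0disj] at this; simp at this
              refine ⟨x, hxU, hxA, connOn_insert hAconn' ha0 hadj, ?_⟩
              intro F hF hxF
              obtain ⟨hFU, hFcard, hFdisj, hFconn⟩ := hF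
              have hFne : F.Nonempty := Finset.card_pos.1 (by omega)
              have hdisjFK : F ∩ insert x A = ∅ := by
                ext z
                simp only [Finset.mem_inter, Finset.mem_insert, Finset.notMem_empty, iff_false]
                rintro ⟨h1, (rfl | h2)⟩
                · exact hxF h1
                · have : z ∈ F ∩ A := Finset.mem_inter.2 ⟨h1, h2⟩
                  rw [hFdisj] at this; simp at this
              have hconnFK : ConnOn G (F ∪ insert x A) := by
                have heq : F ∪ insert x A = insert x (F ∪ A) := by
                  ext z; simp only [Finset.mem_union, Finset.mem_insert]; tauto
                rw [heq]
                exact connOn_insert hFconn (Finset.mem_union_right F ha0) hadj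
              exact key_removable F.card F (insert x A) rfl hFne
                (Finset.insert_nonempty x A) hdisjFK (connOn_insert hAconn' ha0 hadj) hconnFK
          obtain ⟨x, hxU, hxA, hconnxA, hkey⟩ := hxdata
          by_cases hall : ∀ F ∈ Supp G U A (r' + 1), x ∈ F
          · have heq : SigmaC G U A (r' + 1) = delC (SigmaC G U A (r' + 1)) x := by
              ext H
              constructor
              · intro h
                refine ⟨h, ?_⟩
                obtain ⟨F, hF, hsub⟩ := h
                intro hxH
                have := hsub hxH
                simp only [Finset.mem_sdiff] at this
                exact this.1.2 (hall F hF)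
              · exact fun h => h.1
            rw [heq, delC_eq hxU hxA hkey]
            exact ih (U.card + r') (by omega) U (insert x A) r' (le_refl _)
              (Finset.insert_subset hxU hAU)
              (fun h => (Finset.insert_ne_empty x A h).elim) (fun _ => hconnxA)
          · push_neg at hall
            obtain ⟨F1, hF1, hxF1⟩ := hall
            refine VD.step _ x ⟨F1, hF1, ?_⟩ (shedding_of_key hAU hxU hxA (by omega) hkey) ?_ ?_
            · intro z hz
              rw [Finset.mem_singleton] at hz
              subst hz
              simp only [Finset.mem_sdiff]
              exact ⟨⟨hxU, hxF1⟩, hxA⟩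
            · rw [linkC_eq hxU hxA]
              refine ih ((U.erase x).card + (r' + 1)) ?_ _ A (r' + 1) (le_refl _) ?_ hA2 hAconn
              · rw [Finset.card_erase_of_mem hxU]
                have : 1 ≤ U.card := Finset.card_pos.2 ⟨x, hxU⟩
                omega
              · intro z hz
                exact Finset.mem_erase.2 ⟨fun h => hxA (h ▸ hz), hAU hz⟩
            · rw [delC_eq hxU hxA hkey]
              exact ih (U.card + r') (by omega) U (insert x A) r' (le_refl _)
                (Finset.insert_subset hxU hAU)
                (fun h => (Finset.insert_ne_empty x A h).elim) (fun _ => hconnxA)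
        · push_neg at hne
          rw [sigma_empty_of_no_supp hne]
          exact VD.void

/-- If `G` is co-chordal (its complement is chordal) and `r ≥ 2`, then
`Σ_r(G)` is vertex decomposable. -/
theorem sigma_vd_of_cochordal {V : Type*} [Fintype V] [DecidableEq V]
    (G : SimpleGraph V) (r : ℕ) (hr : 2 ≤ r) (hcochordal : Chordal Gᶜ) :
    VD (SigmaG G Finset.univ r) := by
  have heq : SigmaG G Finset.univ r = SigmaC G Finset.univ ∅ r := by
    ext H
    constructor
    · rintro ⟨W, ⟨hWU, hWcard, hWconn⟩, hsub⟩
      exact ⟨W, ⟨hWU, hWcard, by simp, by rwa [Finset.union_empty]⟩, by rwa [Finset.sdiff_empty]⟩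
    · rintro ⟨F, ⟨hFU, hFcard, _, hFconn⟩, hsub⟩
      rw [Finset.union_empty] at hFconn
      rw [Finset.sdiff_empty] at hsub
      exact ⟨F, ⟨hFU, hFcard, hFconn⟩, hsub⟩
  rw [heq]
  exact mainVD hcochordal (Finset.univ.card + r) Finset.univ ∅ r (le_refl _)
    (Finset.empty_subset _) (fun _ => hr) (fun h => absurd h (by simp))
end

section
/- Let n ≥ 3 and r ≥ 2 be integers with n ≤ r + 2, and let C_n be the cycle graph on n vertices. Then the simplicial complex Σ_r(C_n) is vertex decomposable. -/
open Finset

variable {V : Type*} [Fintype V] [DecidableEq V]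

open Fin.CommRing

lemma reach_iff {α : Type*} {G : SimpleGraph α} (p : α → Prop)
    (h : ∀ x y, G.Adj x y → (p x ↔ p y)) {u v : α} (hr : G.Reachable u v) : p u ↔ p v := by
  obtain ⟨w⟩ := hr
  induction w with
  | nil => exact Iff.rfl
  | cons h' _ ih => exact (h _ _ h').trans ih

lemma fin_cast_val {n k : ℕ} [NeZero n] (hk : k < n) : ((k : Fin n)).val = k :=
  Fin.val_cast_of_lt hk

lemma chain_conn {n : ℕ} [NeZero n] (hn : 2 ≤ n) (a : Fin n) (m : ℕ) (hm : 1 ≤ m)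
    (s : Finset (Fin n))
    (hmem : ∀ x : Fin n, x ∈ s ↔ ∃ k : ℕ, 1 ≤ k ∧ k ≤ m ∧ x = a + (k : Fin n)) :
    ConnOn (SimpleGraph.cycleGraph n) s := by
  have hone : (1 : Fin n).val = 1 := by
    rw [Fin.val_one']; exact Nat.mod_eq_of_lt (by omega)
  have hm1 : a + ((1:ℕ) : Fin n) ∈ s := (hmem _).2 ⟨1, le_refl _, hm, rfl⟩
  have key : ∀ k : ℕ, 1 ≤ k → k ≤ m →
      ∃ hk : (a + (k : Fin n)) ∈ s,
        ((SimpleGraph.cycleGraph n).induce (s : Set (Fin n))).Reachable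
          ⟨a + ((1:ℕ) : Fin n), by simpa using hm1⟩
          ⟨a + (k : Fin n), by simpa using hk⟩ := by
    intro k hk1 hkm
    induction k with
    | zero => omega
    | succ k ih =>
      rcases Nat.eq_or_lt_of_le hk1 with h1 | h1
      · obtain rfl : k = 0 := by omega
        have hm' : a + ((0+1:ℕ) : Fin n) ∈ s := by norm_num; exact hm1
        refine ⟨hm', ?_⟩
        have : (⟨a + ((0+1:ℕ) : Fin n), by simpa using hm'⟩ :
            (s : Set (Fin n))) = ⟨a + ((1:ℕ) : Fin n), by simpa using hm1⟩ :=
          Subtype.ext (by norm_num)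
        rw [this]
      · obtain ⟨hks, hreach⟩ := ih (by omega) (by omega)
        have hmem' : a + ((k+1 : ℕ) : Fin n) ∈ s := (hmem _).2 ⟨k+1, hk1, hkm, rfl⟩
        refine ⟨hmem', hreach.trans (SimpleGraph.Adj.reachable ?_)⟩
        show ((SimpleGraph.cycleGraph n).comap _).Adj _ _
        rw [SimpleGraph.comap_adj]
        show (SimpleGraph.cycleGraph n).Adj (a + ((k:ℕ) : Fin n)) (a + ((k+1:ℕ) : Fin n))
        rw [SimpleGraph.cycleGraph_adj']
        right
        have : (a + ((k+1:ℕ) : Fin n)) - (a + ((k:ℕ) : Fin n)) = 1 := by push_cast; ring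
        rw [this, hone]
  rw [ConnOn, SimpleGraph.connected_iff]
  constructor
  · intro u v
    obtain ⟨k, hk1, hkm, hxk⟩ := (hmem u.val).1 (by simpa using u.prop)
    obtain ⟨l, hl1, hlm, hxl⟩ := (hmem v.val).1 (by simpa using v.prop)
    obtain ⟨hks, hru⟩ := key k hk1 hkm
    obtain ⟨hls, hrv⟩ := key l hl1 hlm
    have hu : u = ⟨a + (k : Fin n), by simpa using hks⟩ := Subtype.ext hxk
    have hv : v = ⟨a + (l : Fin n), by simpa using hls⟩ := Subtype.ext hxl
    rw [hu, hv]
    exact hru.symm.trans hrv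
  · exact ⟨⟨a + ((1:ℕ) : Fin n), by simpa using hm1⟩⟩

lemma not_conn {n : ℕ} [NeZero n] (hn : 3 ≤ n) (a b : Fin n) (hab : a ≠ b)
    (hnadj : ¬ (SimpleGraph.cycleGraph n).Adj a b) :
    ¬ ConnOn (SimpleGraph.cycleGraph n) (Finset.univ \ {a, b}) := by
  intro hconn
  set s : Finset (Fin n) := Finset.univ \ {a, b} with hs
  set d : ℕ := (b - a).val with hd
  have hone : (1 : Fin n).val = 1 := by
    rw [Fin.val_one']; exact Nat.mod_eq_of_lt (by omega)
  have hd0 : d ≠ 0 := by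
    intro h0
    apply hab
    have hz : b - a = 0 := Fin.ext (by simp [← hd, h0])
    exact (sub_eq_zero.mp hz).symm
  have hdlt : d < n := (b - a).isLt
  rw [SimpleGraph.cycleGraph_adj'] at hnadj
  push_neg at hnadj
  have hd1 : d ≠ 1 := fun h => hnadj.2 h
  have hdn1 : d ≠ n - 1 := by
    intro h
    apply hnadj.1
    have : a - b = -(b - a) := by ring
    rw [this, Fin.neg_def]
    simp only [Fin.val_mk]
    rw [← hd]
    rw [show n - d = 1 by omega]
    exact Nat.mod_eq_of_lt (by omega)
  -- so 2 ≤ d ≤ n - 2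
  have hd2 : 2 ≤ d := by omega
  have hdn2 : d ≤ n - 2 := by omega
  -- the two witness vertices
  have humem : a + ((1:ℕ) : Fin n) ∈ s := by
    simp only [hs, Finset.mem_sdiff, Finset.mem_univ, true_and, Finset.mem_insert,
      Finset.mem_singleton]
    push_neg
    constructor
    · intro h
      rw [add_eq_left] at h
      have := congrArg Fin.val h
      rw [fin_cast_val (show (1:ℕ) < n by omega)] at this
      simp at this
    · intro h
      have := congrArg (fun z => (z - a).val) h
      simp only [add_sub_cancel_left] at this
      rw [fin_cast_val (show (1:ℕ) < n by omega), ← hd] at this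
      omega
  have hwmem : a + ((n-1:ℕ) : Fin n) ∈ s := by
    simp only [hs, Finset.mem_sdiff, Finset.mem_univ, true_and, Finset.mem_insert,
      Finset.mem_singleton]
    push_neg
    constructor
    · intro h
      rw [add_eq_left] at h
      have := congrArg Fin.val h
      rw [fin_cast_val (show (n-1:ℕ) < n by omega)] at this
      simp only [Fin.val_zero] at this
      omega
    · intro h
      have := congrArg (fun z => (z - a).val) h
      simp only [add_sub_cancel_left] at this
      rw [fin_cast_val (show (n-1:ℕ) < n by omega), ← hd] at this
      omega
  -- invariance of the coloring
  have hinv : ∀ x y : (s : Set (Fin n)),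
      ((SimpleGraph.cycleGraph n).induce (s : Set (Fin n))).Adj x y →
      (((x.val - a).val < d) ↔ ((y.val - a).val < d)) := by
    have main : ∀ x y : Fin n, x ∈ s → y ∈ s → (y - x).val = 1 →
        (((x - a).val < d) ↔ ((y - a).val < d)) := by
      intro x y hxs hys hxy
      have hyx : y = x + 1 := by
        have : y - x = 1 := Fin.ext (by rw [hxy, hone])
        rw [← this]; ring
      have hys' : y - a = (x - a) + 1 := by rw [hyx]; ring
      set t : ℕ := (x - a).val with ht
      have htn : t < n := (x - a).isLt
      have htn1 : t ≠ n - 1 := by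
        intro h
        -- then y = a, contradiction with y ∈ s
        have : y - a = 0 := by
          rw [hys']
          have : x - a = ((n-1 : ℕ) : Fin n) := Fin.ext (by rw [fin_cast_val (by omega)]; omega)
          rw [this]
          have : ((n-1:ℕ) : Fin n) + 1 = (((n-1)+1 : ℕ) : Fin n) := by push_cast; ring
          rw [this]
          have : ((n-1)+1 : ℕ) = n := by omega
          rw [this]
          exact Fin.natCast_self n
        have hya : y = a := by rwa [sub_eq_zero] at this
        rw [hs] at hys
        simp [hya] at hys
      have hval : (y - a).val = t + 1 := by
        rw [hys', Fin.val_add, hone, ← ht]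
        exact Nat.mod_eq_of_lt (by omega)
      have htd : t + 1 ≠ d := by
        intro h
        have : y - a = b - a := Fin.ext (by rw [hval, h, ← hd])
        have : y = b := by
          have := congrArg (fun z => z + a) this
          simpa [sub_add_cancel] using this
        rw [hs] at hys
        simp [this] at hys
      rw [hval]
      omega
    intro x y hadj
    rw [SimpleGraph.comap_adj, SimpleGraph.cycleGraph_adj'] at hadj
    have hxs : x.val ∈ s := by simpa using x.prop
    have hys : y.val ∈ s := by simpa using y.prop
    rcases hadj with h | h
    · exact (main _ _ hys hxs h).symm
    · exact main _ _ hxs hys h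
  have hreach := hconn.preconnected ⟨a + ((1:ℕ) : Fin n), by simpa using humem⟩
    ⟨a + ((n-1:ℕ) : Fin n), by simpa using hwmem⟩
  have := reach_iff _ hinv hreach
  simp only [add_sub_cancel_left] at this
  rw [fin_cast_val (show (1:ℕ) < n by omega), fin_cast_val (show (n-1:ℕ) < n by omega)] at this
  omega

lemma skel_vd {V : Type*} [DecidableEq V] (S : Finset V) :
    VD {H : Finset V | H ⊆ S ∧ H.card ≤ 1} := by
  induction S using Finset.strongInduction with
  | _ S ih =>
  by_cases hS : S.card ≤ 1
  · have : {H : Finset V | H ⊆ S ∧ H.card ≤ 1} = {H | H ⊆ S} := by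
      ext H
      exact ⟨fun h => h.1, fun h => ⟨h, (Finset.card_le_card h).trans hS⟩⟩
    rw [this]; exact VD.simplex S
  · have h2 : 1 < S.card := by omega
    obtain ⟨x, hxS, y, hyS, hxy⟩ := Finset.one_lt_card.mp h2
    have hdel : delC {H : Finset V | H ⊆ S ∧ H.card ≤ 1} x
        = {H : Finset V | H ⊆ S.erase x ∧ H.card ≤ 1} := by
      ext H
      constructor
      · rintro ⟨⟨h1, h2⟩, h3⟩
        exact ⟨fun z hz => Finset.mem_erase.2 ⟨fun he => h3 (he ▸ hz), h1 hz⟩, h2⟩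
      · rintro ⟨h1, h2⟩
        exact ⟨⟨h1.trans (Finset.erase_subset _ _), h2⟩,
          fun hx => (Finset.mem_erase.mp (h1 hx)).1 rfl⟩
    refine VD.step _ x ⟨Finset.singleton_subset_iff.2 hxS, by simp⟩ ?_ ?_ ?_
    · intro F hF
      rw [hdel] at hF
      obtain ⟨⟨hF1, hF2⟩, hFmax⟩ := hF
      have hy' : ({y} : Finset V) ∈ {H : Finset V | H ⊆ S.erase x ∧ H.card ≤ 1} :=
        ⟨Finset.singleton_subset_iff.2 (Finset.mem_erase.2 ⟨fun h => hxy h.symm, hyS⟩), by simp⟩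
      have hFne : F.Nonempty := by
        rcases F.eq_empty_or_nonempty with rfl | hne
        · exact absurd (hFmax _ hy' (Finset.empty_subset _)).symm (by simp)
        · exact hne
      have hFcard : F.card = 1 := le_antisymm hF2 (Finset.card_pos.2 hFne)
      refine ⟨⟨hF1.trans (Finset.erase_subset _ _), hF2⟩, ?_⟩
      intro H hH hFH
      exact Finset.eq_of_subset_of_card_le hFH (hH.2.trans (le_of_eq hFcard.symm))
    · have : linkC {H : Finset V | H ⊆ S ∧ H.card ≤ 1} x = {t | t ⊆ (∅ : Finset V)} := by
        ext H
        constructor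
        · rintro ⟨⟨h1, h2⟩, h3, h4, h5⟩
          have : H = ∅ := by
            rcases H.eq_empty_or_nonempty with rfl | ⟨z, hz⟩
            · rfl
            · exfalso
              have : 2 ≤ (insert x H).card := by
                rw [Finset.card_insert_of_notMem h3]
                have : 1 ≤ H.card := Finset.card_pos.2 ⟨z, hz⟩
                omega
              omega
          simp [this]
        · intro hH
          have hH' : H = ∅ := Finset.subset_empty.mp hH
          subst hH'
          exact ⟨⟨Finset.empty_subset _, by simp⟩, by simp,
            ⟨by simpa using hxS, by simp⟩⟩
      rw [this]
      exact VD.simplex ∅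
    · rw [hdel]
      exact ih _ (Finset.erase_ssubset hxS)

lemma fin_add_ne {n : ℕ} [NeZero n] (a : Fin n) {k l : ℕ} (hk : k < n) (hl : l < n)
    (hkl : k ≠ l) : a + (k : Fin n) ≠ a + (l : Fin n) := by
  intro h
  have := congrArg (fun z => (z - a).val) h
  simp only [add_sub_cancel_left] at this
  rw [fin_cast_val hk, fin_cast_val hl] at this
  exact hkl this

/-- The path complex on vertices `a+1, …, a+m` (edges `{a+k, a+k+1}`). -/
def pathC (n : ℕ) [NeZero n] (a : Fin n) (m : ℕ) : Set (Finset (Fin n)) :=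
  {H | ∃ k : ℕ, 1 ≤ k ∧ k + 1 ≤ m ∧ H ⊆ {a + (k : Fin n), a + ((k + 1 : ℕ) : Fin n)}}

lemma edge_card {n : ℕ} [NeZero n] (hn : 2 ≤ n) (a : Fin n) {k : ℕ} (hk : k + 1 < n) :
    ({a + (k : Fin n), a + ((k + 1 : ℕ) : Fin n)} : Finset (Fin n)).card = 2 := by
  rw [Finset.card_insert_of_notMem (by
    simp only [Finset.mem_singleton]
    exact fin_add_ne a (by omega) hk (by omega)), Finset.card_singleton]

lemma pathC_vd {n : ℕ} [NeZero n] (hn : 3 ≤ n) (a : Fin n) :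
    ∀ m : ℕ, 2 ≤ m → m ≤ n - 1 → VD (pathC n a m) := by
  intro m hm2
  induction m, hm2 using Nat.le_induction with
  | base =>
    intro _
    have : pathC n a 2 = {H | H ⊆ ({a + ((1 : ℕ) : Fin n), a + ((2 : ℕ) : Fin n)} :
        Finset (Fin n))} := by
      ext H
      constructor
      · rintro ⟨k, hk1, hk2, hsub⟩
        obtain rfl : k = 1 := by omega
        exact hsub
      · intro hsub
        exact ⟨1, le_refl _, by omega, hsub⟩
    rw [this]
    exact VD.simplex _
  | succ m hm ih =>
    intro hmn
    set x : Fin n := a + ((m + 1 : ℕ) : Fin n) with hxdef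
    have hdel : delC (pathC n a (m + 1)) x = pathC n a m := by
      ext H
      constructor
      · rintro ⟨⟨k, hk1, hk2, hsub⟩, hxH⟩
        by_cases hk : k + 1 ≤ m
        · exact ⟨k, hk1, hk, hsub⟩
        · have hkm : k = m := by omega
          have hH : H ⊆ {a + ((k : ℕ) : Fin n)} := by
            intro z hz
            rcases Finset.mem_insert.mp (hsub hz) with h | h
            · simpa using h
            · rw [Finset.mem_singleton] at h
              rw [hkm, ← hxdef] at h
              exact absurd (h ▸ hz) hxH
          refine ⟨k - 1, by omega, by omega, hH.trans ?_⟩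
          rw [show k - 1 + 1 = k by omega]
          intro z hz
          exact Finset.mem_insert.2 (Or.inr hz)
      · rintro ⟨k, hk1, hk2, hsub⟩
        refine ⟨⟨k, hk1, by omega, hsub⟩, fun hxH => ?_⟩
        rw [hxdef] at hxH
        rcases Finset.mem_insert.mp (hsub hxH) with h | h
        · exact fin_add_ne a (k := m + 1) (l := k) (by omega) (by omega) (by omega) h
        · rw [Finset.mem_singleton] at h
          exact fin_add_ne a (k := m + 1) (l := k + 1) (by omega) (by omega) (by omega) h
    have hlink : linkC (pathC n a (m + 1)) x
        = {t | t ⊆ ({a + ((m : ℕ) : Fin n)} : Finset (Fin n))} := by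
      ext H
      constructor
      · rintro ⟨_, hxH, ⟨k, hk1, hk2, hsub⟩⟩
        have hx' := hsub (Finset.mem_insert_self x H)
        rw [hxdef] at hx'
        have hk' : k = m := by
          rcases Finset.mem_insert.mp hx' with h | h
          · exact absurd h (fin_add_ne a (k := m + 1) (l := k) (by omega) (by omega) (by omega))
          · rw [Finset.mem_singleton] at h
            by_contra hne
            exact fin_add_ne a (k := m + 1) (l := k + 1) (by omega) (by omega) (by omega) h
        subst hk'
        intro z hz
        rcases Finset.mem_insert.mp (hsub (Finset.mem_insert_of_mem hz)) with h | h
        · simpa using h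
        · rw [Finset.mem_singleton] at h
          rw [← hxdef] at h
          exact absurd (h ▸ hz) hxH
      · intro hH
        have hmm : H ⊆ ({a + ((m - 1 : ℕ) : Fin n), a + ((m - 1 + 1 : ℕ) : Fin n)} :
            Finset (Fin n)) := by
          rw [show m - 1 + 1 = m by omega]
          exact hH.trans (fun z hz => Finset.mem_insert.2 (Or.inr hz))
        refine ⟨⟨m - 1, by omega, by omega, hmm⟩, ?_, ⟨m, by omega, le_refl _, ?_⟩⟩
        · intro hxH
          have hx1 := Finset.mem_singleton.mp (hH hxH)
          rw [hxdef] at hx1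
          exact fin_add_ne a (k := m + 1) (l := m) (by omega) (by omega) (by omega) hx1
        · intro z hz
          rcases Finset.mem_insert.mp hz with h | h
          · subst h
            exact Finset.mem_insert.2 (Or.inr (by rw [Finset.mem_singleton, hxdef]))
          · have := Finset.mem_singleton.mp (hH h)
            subst this
            exact Finset.mem_insert_self _ _
    refine VD.step _ x ⟨m, by omega, le_refl _, by
      intro z hz
      rw [Finset.mem_singleton] at hz
      subst hz
      exact Finset.mem_insert.2 (Or.inr (by rw [Finset.mem_singleton, hxdef]))⟩ ?_ ?_ ?_
    · intro F hF
      rw [hdel] at hF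
      obtain ⟨⟨k, hk1, hk2, hsub⟩, hFmax⟩ := hF
      have hedge : ({a + (k : Fin n), a + ((k + 1 : ℕ) : Fin n)} : Finset (Fin n))
          ∈ pathC n a m := ⟨k, hk1, hk2, subset_refl _⟩
      have hFe := hFmax _ hedge hsub
      have hcard : F.card = 2 := by rw [hFe]; exact edge_card (by omega) a (by omega)
      refine ⟨⟨k, hk1, by omega, hsub⟩, ?_⟩
      intro H hH hFH
      obtain ⟨l, hl1, hl2, hsubH⟩ := hH
      have hHcard : H.card ≤ 2 := by
        have := Finset.card_le_card hsubH
        rw [edge_card (by omega) a (by omega)] at this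
        exact this
      exact Finset.eq_of_subset_of_card_le hFH (by omega)
    · rw [hlink]; exact VD.simplex _
    · rw [hdel]; exact ih (by omega)

/-- The cycle complex: subsets of edges of the cycle. -/
def cycC (n : ℕ) [NeZero n] : Set (Finset (Fin n)) :=
  {H | ∃ a : Fin n, H ⊆ ({a, a + 1} : Finset (Fin n))}

lemma cycC_vd {n : ℕ} [NeZero n] (hn : 4 ≤ n) : VD (cycC n) := by
  have hone : (1 : Fin n).val = 1 := by
    rw [Fin.val_one']; exact Nat.mod_eq_of_lt (by omega)
  have hzero : (0 : Fin n).val = 0 := rfl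
  have h10 : (1 : Fin n) ≠ 0 := by
    intro h
    have := congrArg Fin.val h
    rw [hone, hzero] at this
    omega
  have hm1 : (-1 : Fin n).val = n - 1 := by
    rw [Fin.neg_def]
    simp only [Fin.val_mk, hone]
    exact Nat.mod_eq_of_lt (by omega)
  have hdel : delC (cycC n) 0 = pathC n 0 (n - 1) := by
    ext H
    constructor
    · rintro ⟨⟨a, hsub⟩, h0H⟩
      by_cases ha0 : a = 0
      · subst ha0
        refine ⟨1, le_refl _, by omega, fun z hz => ?_⟩
        rcases Finset.mem_insert.mp (hsub hz) with h | h
        · exact absurd (h ▸ hz) h0H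
        · rw [Finset.mem_singleton] at h
          exact Finset.mem_insert.2 (Or.inl (by rw [h]; norm_num))
      · by_cases han : a.val = n - 1
        · have ha1 : a + 1 = 0 := by
            have ha : a = ((n - 1 : ℕ) : Fin n) :=
              Fin.ext (by rw [fin_cast_val (by omega)]; exact han)
            rw [ha, show ((n - 1 : ℕ) : Fin n) + 1 = (((n - 1) + 1 : ℕ) : Fin n) by
              push_cast; ring, show n - 1 + 1 = n by omega, Fin.natCast_self]
          have hH : H ⊆ {a} := fun z hz => by
            rcases Finset.mem_insert.mp (hsub hz) with h | h
            · exact Finset.mem_singleton.2 h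
            · rw [Finset.mem_singleton, ha1] at h
              exact absurd (h ▸ hz) h0H
          refine ⟨n - 2, by omega, by omega, hH.trans ?_⟩
          intro z hz
          rw [Finset.mem_singleton] at hz
          subst hz
          apply Finset.mem_insert.2
          right
          rw [Finset.mem_singleton, show n - 2 + 1 = n - 1 by omega, zero_add]
          exact Fin.ext (by rw [fin_cast_val (by omega)]; exact han)
        · have hisLt := a.isLt
          refine ⟨a.val, ?_, by omega, ?_⟩
          · have : a.val ≠ 0 := fun h => ha0 (Fin.ext (by rw [h, hzero]))
            omega
          · intro z hz
            rcases Finset.mem_insert.mp (hsub hz) with h | h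
            · apply Finset.mem_insert.2
              left
              rw [h, zero_add, Fin.cast_val_eq_self]
            · rw [Finset.mem_singleton] at h
              apply Finset.mem_insert.2
              right
              rw [Finset.mem_singleton, h, zero_add,
                show ((a.val + 1 : ℕ) : Fin n) = ((a.val : ℕ) : Fin n) + 1 by push_cast; ring,
                Fin.cast_val_eq_self]
    · rintro ⟨k, hk1, hk2, hsub⟩
      constructor
      · refine ⟨0 + (k : Fin n), hsub.trans fun z hz => ?_⟩
        rcases Finset.mem_insert.mp hz with h | h
        · exact Finset.mem_insert.2 (Or.inl h)
        · rw [Finset.mem_singleton] at h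
          apply Finset.mem_insert.2
          right
          rw [Finset.mem_singleton, h]
          push_cast; ring
      · intro h0H
        rcases Finset.mem_insert.mp (hsub h0H) with h | h
        · have := congrArg Fin.val h
          rw [zero_add, fin_cast_val (by omega), hzero] at this
          omega
        · rw [Finset.mem_singleton] at h
          have := congrArg Fin.val h
          rw [zero_add, fin_cast_val (by omega), hzero] at this
          omega
  have hlink : linkC (cycC n) 0
      = {H | H ⊆ ({1, -1} : Finset (Fin n)) ∧ H.card ≤ 1} := by
    ext H
    constructor
    · rintro ⟨_, h0H, ⟨a', hsub'⟩⟩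
      have h0mem := hsub' (Finset.mem_insert_self 0 H)
      have hHsub : H ⊆ ({a', a' + 1} : Finset (Fin n)) :=
        fun z hz => hsub' (Finset.mem_insert_of_mem hz)
      rcases Finset.mem_insert.mp h0mem with h | h
      · have hH1 : H ⊆ {(1 : Fin n)} := by
          intro z hz
          rcases Finset.mem_insert.mp (hHsub hz) with h2 | h2
          · rw [← h] at h2
            exact absurd (h2 ▸ hz) h0H
          · rw [Finset.mem_singleton] at h2
            rw [Finset.mem_singleton, h2, ← h, zero_add]
        refine ⟨hH1.trans fun z hz => Finset.mem_insert.2 (Or.inl (Finset.mem_singleton.mp hz)), ?_⟩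
        have := Finset.card_le_card hH1
        simpa using this
      · rw [Finset.mem_singleton] at h
        have ha' : a' = -1 := eq_neg_of_add_eq_zero_left h.symm
        have hH1 : H ⊆ {(-1 : Fin n)} := by
          intro z hz
          rcases Finset.mem_insert.mp (hHsub hz) with h2 | h2
          · rw [Finset.mem_singleton, h2, ha']
          · rw [Finset.mem_singleton] at h2
            rw [ha'] at h2
            rw [neg_add_cancel] at h2
            exact absurd (h2 ▸ hz) h0H
        refine ⟨hH1.trans fun z hz => Finset.mem_insert.2 (Or.inr hz), ?_⟩
        have := Finset.card_le_card hH1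
        simpa using this
    · rintro ⟨hsub, hcard⟩
      rcases H.eq_empty_or_nonempty with rfl | ⟨z, hz⟩
      · refine ⟨⟨0, Finset.empty_subset _⟩, by simp, ⟨0, ?_⟩⟩
        intro w hw
        rcases Finset.mem_insert.mp hw with h | h
        · rw [h]; exact Finset.mem_insert_self _ _
        · exact absurd h (Finset.notMem_empty _)
      · have hc1 : H.card = 1 := le_antisymm hcard (Finset.card_pos.2 ⟨z, hz⟩)
        obtain ⟨w, rfl⟩ := Finset.card_eq_one.mp hc1
        have hw := hsub (Finset.mem_singleton_self w)
        rcases Finset.mem_insert.mp hw with h | h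
        · subst h
          refine ⟨⟨1, fun z hz => Finset.mem_insert.2 (Or.inl (Finset.mem_singleton.mp hz))⟩,
            ?_, ⟨0, ?_⟩⟩
          · rw [Finset.mem_singleton]
            exact fun h => h10 h.symm
          · intro z hz
            rcases Finset.mem_insert.mp hz with h | h
            · rw [h]; exact Finset.mem_insert_self _ _
            · rw [Finset.mem_singleton] at h
              apply Finset.mem_insert.2
              right
              rw [Finset.mem_singleton, h, zero_add]
        · rw [Finset.mem_singleton] at h
          subst h
          refine ⟨⟨-1, fun z hz => Finset.mem_insert.2 (Or.inl (Finset.mem_singleton.mp hz))⟩,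
            ?_, ⟨-1, ?_⟩⟩
          · rw [Finset.mem_singleton]
            intro h
            have := congrArg Fin.val h
            rw [hzero, hm1] at this
            omega
          · intro z hz
            rcases Finset.mem_insert.mp hz with h | h
            · apply Finset.mem_insert.2
              right
              rw [Finset.mem_singleton, h, neg_add_cancel]
            · exact Finset.mem_insert.2 (Or.inl (Finset.mem_singleton.mp h))
  refine VD.step _ 0 ⟨0, Finset.singleton_subset_iff.2 (Finset.mem_insert_self _ _)⟩ ?_ ?_ ?_
  · intro F hF
    rw [hdel] at hF
    obtain ⟨⟨k, hk1, hk2, hsub⟩, hFmax⟩ := hF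
    have hedge : ({(0 : Fin n) + (k : Fin n), (0 : Fin n) + ((k + 1 : ℕ) : Fin n)} :
        Finset (Fin n)) ∈ pathC n 0 (n - 1) := ⟨k, hk1, hk2, subset_refl _⟩
    have hFe := hFmax _ hedge hsub
    have hcard : F.card = 2 := by rw [hFe]; exact edge_card (by omega) 0 (by omega)
    constructor
    · refine ⟨0 + (k : Fin n), hsub.trans fun z hz => ?_⟩
      rcases Finset.mem_insert.mp hz with h | h
      · exact Finset.mem_insert.2 (Or.inl h)
      · rw [Finset.mem_singleton] at h
        apply Finset.mem_insert.2
        right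
        rw [Finset.mem_singleton, h]
        push_cast; ring
    · intro K hK hFK
      obtain ⟨b, hsubK⟩ := hK
      have hKcard : K.card ≤ 2 := by
        refine (Finset.card_le_card hsubK).trans ?_
        refine (Finset.card_insert_le _ _).trans ?_
        simp
      exact Finset.eq_of_subset_of_card_le hFK (by omega)
  · rw [hlink]
    exact skel_vd _
  · rw [hdel]
    exact pathC_vd (by omega) 0 (n - 1) (by omega) (le_refl _)


lemma add_one_add_cast {n : ℕ} [NeZero n] (a : Fin n) :
    (a + 1) + ((n - 1 : ℕ) : Fin n) = a := by
  have hnpos : 0 < n := Nat.pos_of_ne_zero (NeZero.ne n)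
  calc (a + 1) + ((n - 1 : ℕ) : Fin n) = a + (((n - 1 : ℕ) : Fin n) + 1) := by ring
    _ = a + ((n - 1 + 1 : ℕ) : Fin n) := by rw [show ((n - 1 + 1 : ℕ) : Fin n)
          = ((n - 1 : ℕ) : Fin n) + 1 from by push_cast; ring]
    _ = a := by rw [show n - 1 + 1 = n from by omega, Fin.natCast_self, add_zero]

/-- For `n ≥ 3`, `r ≥ 2` with `n ≤ r + 2`, the complex `Σ_r(C_n)` of the
cycle graph `C_n` is vertex decomposable. -/
theorem sigma_cycle_vd (n r : ℕ) (hn : 3 ≤ n) (hr : 2 ≤ r) (h : n ≤ r + 2) :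
    VD (SigmaG (SimpleGraph.cycleGraph n) Finset.univ r) := by
  haveI : NeZero n := ⟨by omega⟩
  have hone : (1 : Fin n).val = 1 := by
    rw [Fin.val_one']; exact Nat.mod_eq_of_lt (by omega)
  have hzero : (0 : Fin n).val = 0 := rfl
  have hcardU : (Finset.univ : Finset (Fin n)).card = n := by simp
  rcases (by omega : n < r ∨ r = n ∨ r = n - 1 ∨ r = n - 2) with hc | hc | hc | hc
  · -- r > n : void complex
    have hempty : SigmaG (SimpleGraph.cycleGraph n) Finset.univ r
        = (∅ : Set (Finset (Fin n))) := by
      ext H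
      simp only [Set.mem_empty_iff_false, iff_false]
      rintro ⟨W, ⟨hWu, hWc, _⟩, _⟩
      have := Finset.card_le_univ W
      rw [Fintype.card_fin] at this
      omega
    rw [hempty]
    exact VD.void
  · -- r = n : the complex {∅}
    have hconnU : ConnOn (SimpleGraph.cycleGraph n) Finset.univ := by
      refine chain_conn (by omega) 0 n (by omega) _ ?_
      intro x
      simp only [Finset.mem_univ, true_iff]
      by_cases hx : x = 0
      · exact ⟨n, by omega, le_refl _, by rw [hx, Fin.natCast_self, add_zero]⟩
      · refine ⟨x.val, ?_, le_of_lt x.isLt, by rw [Fin.cast_val_eq_self, zero_add]⟩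
        have : x.val ≠ 0 := fun h0 => hx (Fin.ext (by rw [h0, hzero]))
        omega
    have heq : SigmaG (SimpleGraph.cycleGraph n) Finset.univ r
        = {t | t ⊆ (∅ : Finset (Fin n))} := by
      ext H
      constructor
      · rintro ⟨W, ⟨hWu, hWc, _⟩, hsub⟩
        have hWuniv : W = Finset.univ :=
          Finset.eq_univ_of_card W (by rw [Fintype.card_fin]; omega)
        rw [hWuniv, Finset.sdiff_self] at hsub
        exact hsub
      · intro hsub
        refine ⟨Finset.univ, ⟨subset_refl _, by rw [hcardU]; omega, hconnU⟩, ?_⟩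
        rw [Finset.sdiff_self]
        exact hsub
    rw [heq]
    exact VD.simplex _
  · -- r = n - 1 : the 0-skeleton
    have hconnE : ∀ v : Fin n, ConnOn (SimpleGraph.cycleGraph n) (Finset.univ \ {v}) := by
      intro v
      refine chain_conn (by omega) v (n - 1) (by omega) _ ?_
      intro x
      simp only [Finset.mem_sdiff, Finset.mem_univ, true_and, Finset.mem_singleton]
      constructor
      · intro hxv
        have hislt := (x - v).isLt
        refine ⟨(x - v).val, ?_, by omega, by rw [Fin.cast_val_eq_self]; ring⟩
        have hne : (x - v).val ≠ 0 := by
          intro h0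
          exact hxv (by
            have : x - v = 0 := Fin.ext (by rw [h0, hzero])
            have := sub_eq_zero.mp this
            exact this)
        omega
      · rintro ⟨k, hk1, hk2, rfl⟩
        intro heq
        apply fin_add_ne v (k := k) (l := 0) (by omega) (by omega) (by omega)
        rw [Nat.cast_zero, add_zero]
        exact heq
    have heq : SigmaG (SimpleGraph.cycleGraph n) Finset.univ r
        = {H : Finset (Fin n) | H ⊆ Finset.univ ∧ H.card ≤ 1} := by
      ext H
      constructor
      · rintro ⟨W, ⟨hWu, hWc, _⟩, hsub⟩
        refine ⟨Finset.subset_univ _, ?_⟩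
        have hcs : (Finset.univ \ W).card = 1 := by
          rw [Finset.card_sdiff_of_subset hWu, hcardU, hWc]
          omega
        have := Finset.card_le_card hsub
        omega
      · rintro ⟨-, hcard⟩
        have hv : ∃ v : Fin n, H ⊆ {v} := by
          rcases H.eq_empty_or_nonempty with rfl | ⟨z, hz⟩
          · exact ⟨0, Finset.empty_subset _⟩
          · have hc1 : H.card = 1 := le_antisymm hcard (Finset.card_pos.2 ⟨z, hz⟩)
            obtain ⟨w, rfl⟩ := Finset.card_eq_one.mp hc1
            exact ⟨w, subset_refl _⟩
        obtain ⟨v, hHv⟩ := hv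
        refine ⟨Finset.univ \ {v}, ⟨Finset.sdiff_subset, ?_, hconnE v⟩, ?_⟩
        · rw [Finset.card_sdiff_of_subset (Finset.subset_univ _), hcardU, Finset.card_singleton]
          omega
        · rw [Finset.sdiff_sdiff_self_left, Finset.univ_inter]
          exact hHv
    rw [heq]
    exact skel_vd _
  · -- r = n - 2 : the cycle complex
    have hn4 : 4 ≤ n := by omega
    have hconnP : ∀ a : Fin n,
        ConnOn (SimpleGraph.cycleGraph n) (Finset.univ \ {a, a + 1}) := by
      intro a
      refine chain_conn (by omega) (a + 1) (n - 2) (by omega) _ ?_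
      intro x
      simp only [Finset.mem_sdiff, Finset.mem_univ, true_and, Finset.mem_insert,
        Finset.mem_singleton]
      rw [not_or]
      constructor
      · rintro ⟨hxa, hxa1⟩
        have hislt := (x - (a + 1)).isLt
        have hk1 : (x - (a + 1)).val ≠ 0 := by
          intro h0
          exact hxa1 (sub_eq_zero.mp (Fin.ext (by rw [h0, hzero])))
        have hkn1 : (x - (a + 1)).val ≠ n - 1 := by
          intro hk
          apply hxa
          have hsub' : x - (a + 1) = ((n - 1 : ℕ) : Fin n) :=
            Fin.ext (by rw [fin_cast_val (by omega)]; exact hk)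
          have hx : x = (a + 1) + (x - (a + 1)) := by ring
          rw [hsub', add_one_add_cast] at hx
          exact hx
        exact ⟨(x - (a + 1)).val, by omega, by omega, by rw [Fin.cast_val_eq_self]; ring⟩
      · rintro ⟨k, hk1, hk2, rfl⟩
        constructor
        · intro heq
          apply fin_add_ne (a + 1) (k := k) (l := n - 1) (by omega) (by omega) (by omega)
          rw [heq]
          exact (add_one_add_cast a).symm
        · intro heq
          apply fin_add_ne (a + 1) (k := k) (l := 0) (by omega) (by omega) (by omega)
          rw [Nat.cast_zero, add_zero]
          exact heq
    have heq : SigmaG (SimpleGraph.cycleGraph n) Finset.univ r = cycC n := by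
      ext H
      constructor
      · rintro ⟨W, ⟨hWu, hWc, hWconn⟩, hsub⟩
        have hcs : (Finset.univ \ W).card = 2 := by
          rw [Finset.card_sdiff_of_subset hWu, hcardU, hWc]
          omega
        obtain ⟨x, y, hxy, hxyW⟩ := Finset.card_eq_two.mp hcs
        have hWeq : W = Finset.univ \ {x, y} := by
          rw [← hxyW, Finset.sdiff_sdiff_self_left, Finset.univ_inter]
        have hadj : (SimpleGraph.cycleGraph n).Adj x y := by
          by_contra hnadj
          rw [hWeq] at hWconn
          exact not_conn (by omega) x y hxy hnadj hWconn
        rw [SimpleGraph.cycleGraph_adj'] at hadj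
        rw [hxyW] at hsub
        rcases hadj with hxy1 | hxy1
        · have hx1 : x = y + 1 := by
            have hsub1 : x - y = 1 := Fin.ext (by rw [hxy1, hone])
            rw [← hsub1]; ring
          refine ⟨y, fun z hz => ?_⟩
          rcases Finset.mem_insert.mp (hsub hz) with h2 | h2
          · rw [hx1] at h2
            exact Finset.mem_insert.2 (Or.inr (Finset.mem_singleton.2 h2))
          · exact Finset.mem_insert.2 (Or.inl (Finset.mem_singleton.mp h2))
        · have hy1 : y = x + 1 := by
            have hsub1 : y - x = 1 := Fin.ext (by rw [hxy1, hone])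
            rw [← hsub1]; ring
          exact ⟨x, by rw [← hy1]; exact hsub⟩
      · rintro ⟨a, hsub⟩
        have hpair : ({a, a + 1} : Finset (Fin n)).card = 2 := by
          rw [Finset.card_insert_of_notMem (by
            rw [Finset.mem_singleton]
            intro h2
            apply fin_add_ne a (k := 0) (l := 1) (by omega) (by omega) (by omega)
            rw [Nat.cast_zero, add_zero, Nat.cast_one]
            exact h2), Finset.card_singleton]
        refine ⟨Finset.univ \ {a, a + 1}, ⟨Finset.sdiff_subset, ?_, hconnP a⟩, ?_⟩
        · rw [Finset.card_sdiff_of_subset (Finset.subset_univ _), hcardU, hpair]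
          omega
        · rw [Finset.sdiff_sdiff_self_left, Finset.univ_inter]
          exact hsub
    rw [heq]
    exact cycC_vd hn4
end
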